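/- arXiv:1306.3673 — 6 statements merged into one kernel-verified Lean document; each statement's English description precedes it below -/
import Mathlib

section
/- The center of the centralizer D^E of the Euler vector field E in the Weyl algebra D(n+1) (n ≥ 1) is the polynomial algebra C[E] generated by E. -/
open MvPolynomial

abbrev PolyN (n : ℕ) := MvPolynomial (Fin (n + 1)) ℂ

noncomputable def tOp (n : ℕ) (i : Fin (n + 1)) : Module.End ℂ (PolyN n) :=
  LinearMap.mulLeft ℂ (X i : PolyN n)

noncomputable def dOp (n : ℕ) (i : Fin (n + 1)) : Module.End ℂ (PolyN n) :=
  (pderiv i).toLinearMap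

/-- The Weyl algebra `D(n+1)`. -/
noncomputable def weylD (n : ℕ) : Subalgebra ℂ (Module.End ℂ (PolyN n)) :=
  Algebra.adjoin ℂ (Set.range (tOp n) ∪ Set.range (dOp n))

/-- The Euler vector field `E = Σ t_i ∂_i`. -/
noncomputable def eulerOp (n : ℕ) : Module.End ℂ (PolyN n) :=
  ∑ i, tOp n i * dOp n i

/-- The centralizer `D^E` of `E` in the Weyl algebra `D(n+1)`. -/
noncomputable def weylDE (n : ℕ) : Subalgebra ℂ (Module.End ℂ (PolyN n)) :=
  weylD n ⊓ Subalgebra.centralizer ℂ {eulerOp n}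

variable {n : ℕ}

/-- total degree of an exponent vector -/
def deg (c : Fin (n+1) →₀ ℕ) : ℕ := ∑ i, c i

lemma deg_add (c d : Fin (n+1) →₀ ℕ) : deg (c + d) = deg c + deg d := by
  simp [deg, Finset.sum_add_distrib]

lemma deg_single (i : Fin (n+1)) (k : ℕ) : deg (Finsupp.single i k) = k := by
  simp [deg, Finsupp.single_apply]

-- linear maps equal if equal on monomials
lemma lhom_ext_mon {f g : Module.End ℂ (PolyN n)}
    (h : ∀ c r, f (monomial c r) = g (monomial c r)) : f = g := by
  refine LinearMap.ext fun p => ?_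
  rw [p.as_sum, map_sum, map_sum]
  exact Finset.sum_congr rfl fun c _ => h c _

lemma tOp_monomial (i : Fin (n+1)) (c : Fin (n+1) →₀ ℕ) (r : ℂ) :
    tOp n i (monomial c r) = monomial (c + Finsupp.single i 1) r := by
  simp [tOp, LinearMap.mulLeft_apply, X, monomial_mul, add_comm]

lemma dOp_monomial (i : Fin (n+1)) (c : Fin (n+1) →₀ ℕ) (r : ℂ) :
    dOp n i (monomial c r) = monomial (c - Finsupp.single i 1) (r * c i) := by
  simp [dOp, pderiv_monomial]

lemma eulerOp_monomial (c : Fin (n+1) →₀ ℕ) (r : ℂ) :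
    eulerOp n (monomial c r) = (deg c : ℂ) • monomial c r := by
  have h : ∀ i : Fin (n+1), tOp n i (dOp n i (monomial c r)) = (c i : ℂ) • monomial c r := by
    intro i
    rw [dOp_monomial, tOp_monomial]
    by_cases hc : c i = 0
    · simp [hc]
    · have : c - Finsupp.single i 1 + Finsupp.single i 1 = c := by
        ext j
        by_cases hj : j = i
        · subst hj; simp [Finsupp.single_apply]; omega
        · simp [Finsupp.single_apply, if_neg (Ne.symm hj)]
      rw [this, smul_monomial, smul_eq_mul, mul_comm]
  simp only [eulerOp, LinearMap.sum_apply, Module.End.mul_apply, h, deg]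
  rw [← Finset.sum_smul]
  norm_cast

lemma coeff_eulerOp (p : PolyN n) (c : Fin (n+1) →₀ ℕ) :
    coeff c (eulerOp n p) = (deg c : ℂ) * coeff c p := by
  have h : eulerOp n p = ∑ d ∈ p.support, (deg d : ℂ) • monomial d (coeff d p) := by
    conv_lhs => rw [p.as_sum, map_sum]
    simp only [eulerOp_monomial]
  rw [h, coeff_sum]
  simp only [coeff_smul, coeff_monomial]
  rw [Finset.sum_eq_single c]
  · simp [smul_eq_mul]
  · intro d _ hd
    simp [hd]
  · intro hc
    simp [notMem_support_iff.mp hc]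

lemma support_deg_of_euler_eig {p : PolyN n} {k : ℕ}
    (h : eulerOp n p = (k : ℂ) • p) : ∀ c ∈ p.support, deg c = k := by
  intro c hc
  have h1 : (deg c : ℂ) * coeff c p = (k : ℂ) * coeff c p := by
    rw [← coeff_eulerOp, h, coeff_smul, smul_eq_mul]
  have h2 : coeff c p ≠ 0 := mem_support_iff.mp hc
  have h3 : (deg c : ℂ) = (k : ℂ) := by
    field_simp at h1
    tauto
  exact_mod_cast h3

lemma dOp_pow_monomial (i : Fin (n+1)) (m : ℕ) (c : Fin (n+1) →₀ ℕ) (r : ℂ) :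
    (dOp n i ^ m) (monomial c r)
      = monomial (c - Finsupp.single i m) (r * ((c i).descFactorial m : ℂ)) := by
  induction m generalizing c r with
  | zero => simp
  | succ m ih =>
    rw [pow_succ, Module.End.mul_apply, dOp_monomial, ih]
    have hap : (c - Finsupp.single i 1 : Fin (n+1) →₀ ℕ) i = c i - 1 := by
      simp [Finsupp.single_apply]
    have hnat : (c i) * ((c i - 1).descFactorial m) = (c i).descFactorial (m+1) := by
      cases hci : c i with
      | zero => simp
      | succ h => rw [Nat.succ_descFactorial_succ]; simp
    rw [hap]
    have hidx : c - Finsupp.single i 1 - Finsupp.single i m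
        = c - Finsupp.single i (m + 1) := by
      have h1m : 1 + m = m + 1 := by omega
      rw [tsub_tsub, ← Finsupp.single_add, h1m]
    rw [hidx]
    congr 1
    push_cast [← hnat]
    ring

lemma tOp_mem (i : Fin (n+1)) : tOp n i ∈ weylD n :=
  Algebra.subset_adjoin (Set.mem_union_left _ (Set.mem_range_self i))

lemma dOp_mem (i : Fin (n+1)) : dOp n i ∈ weylD n :=
  Algebra.subset_adjoin (Set.mem_union_right _ (Set.mem_range_self i))

lemma mulLeft_mem (p : PolyN n) : LinearMap.mulLeft ℂ p ∈ weylD n := by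
  induction p using MvPolynomial.induction_on with
  | C a =>
    have : LinearMap.mulLeft ℂ (C a : PolyN n) = algebraMap ℂ _ a := by
      refine LinearMap.ext fun q => ?_
      simp [LinearMap.mulLeft_apply, Algebra.smul_def]
    rw [this]
    exact Subalgebra.algebraMap_mem _ a
  | add p q hp hq =>
    have : LinearMap.mulLeft ℂ (p + q) = LinearMap.mulLeft ℂ p + LinearMap.mulLeft ℂ q := by
      refine LinearMap.ext fun v => ?_
      simp [LinearMap.mulLeft_apply, add_mul]
    rw [this]
    exact Subalgebra.add_mem _ hp hq
  | mul_X p i hp =>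
    rw [LinearMap.mulLeft_mul]
    exact Subalgebra.mul_mem _ hp (tOp_mem i)

lemma eulerOp_mem : eulerOp n ∈ weylD n :=
  Subalgebra.sum_mem _ fun i _ => Subalgebra.mul_mem _ (tOp_mem i) (dOp_mem i)

lemma c0_lt {c : Fin (n+1) →₀ ℕ} {k : ℕ} (hdeg : deg c = k)
    (hne : c ≠ Finsupp.single 0 k) : c 0 < k := by
  by_contra hge
  push_neg at hge
  have hle : c 0 ≤ deg c :=
    Finset.single_le_sum (f := fun j => c j) (fun _ _ => Nat.zero_le _) (Finset.mem_univ 0)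
  have h0 : c 0 = k := by omega
  apply hne
  ext j
  by_cases hj : j = 0
  · subst hj; simp [h0]
  · rw [Finsupp.single_apply, if_neg (Ne.symm hj)]
    have hsum : ∑ t ∈ Finset.univ.erase 0, c t = 0 := by
      have h2 : ∑ t ∈ Finset.univ.erase 0, c t + c 0 = ∑ t, c t :=
        Finset.sum_erase_add _ _ (Finset.mem_univ 0)
      unfold deg at hdeg
      omega
    exact Finset.sum_eq_zero_iff.mp hsum j (Finset.mem_erase.mpr ⟨hj, Finset.mem_univ _⟩)

lemma deg_sub {c : Fin (n+1) →₀ ℕ} {i : Fin (n+1)} {k : ℕ} (h : k ≤ c i) :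
    deg (c - Finsupp.single i k) = deg c - k := by
  have key : ∀ j, (c - Finsupp.single i k : Fin (n+1) →₀ ℕ) j
      = if j = i then c i - k else c j := by
    intro j
    by_cases hj : j = i
    · subst hj; simp
    · simp [Finsupp.single_apply, if_neg (Ne.symm hj), hj]
  unfold deg
  rw [← Finset.add_sum_erase Finset.univ _ (Finset.mem_univ i),
      ← Finset.add_sum_erase Finset.univ (fun t => c t) (Finset.mem_univ i)]
  have h1 : ∑ t ∈ Finset.univ.erase i, (c - Finsupp.single i k : Fin (n+1) →₀ ℕ) t
      = ∑ t ∈ Finset.univ.erase i, c t := by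
    refine Finset.sum_congr rfl fun t ht => ?_
    rw [key t, if_neg (Finset.mem_erase.mp ht).1]
  rw [h1, key i, if_pos rfl]
  omega

/-- the matrix-unit-like operator -/
noncomputable def uOp (n : ℕ) (a : Fin (n+1) →₀ ℕ) (k : ℕ) : Module.End ℂ (PolyN n) :=
  LinearMap.mulLeft ℂ (monomial a 1) * (dOp n 0 ^ k)

lemma uOp_monomial (a : Fin (n+1) →₀ ℕ) (k : ℕ) (c : Fin (n+1) →₀ ℕ) (r : ℂ) :
    uOp n a k (monomial c r)
      = monomial (a + (c - Finsupp.single 0 k)) (r * ((c 0).descFactorial k : ℂ)) := by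
  rw [uOp, Module.End.mul_apply, dOp_pow_monomial, LinearMap.mulLeft_apply, monomial_mul, one_mul]

lemma uOp_mem_weylDE (a : Fin (n+1) →₀ ℕ) (k : ℕ) (hk : deg a = k) :
    uOp n a k ∈ weylDE n := by
  rw [weylDE, Algebra.mem_inf]
  constructor
  · exact Subalgebra.mul_mem _ (mulLeft_mem _) (Subalgebra.pow_mem _ (dOp_mem 0) k)
  · rw [Subalgebra.mem_centralizer_iff]
    intro g hg
    rw [Set.mem_singleton_iff] at hg
    subst hg
    refine lhom_ext_mon fun c r => ?_
    rw [Module.End.mul_apply, Module.End.mul_apply, uOp_monomial, eulerOp_monomial,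
      eulerOp_monomial, map_smul, uOp_monomial]
    by_cases hdf : (c 0).descFactorial k = 0
    · simp [hdf]
    · have hkc : k ≤ c 0 := by
        by_contra hlt
        exact hdf (Nat.descFactorial_of_lt (by omega))
      have hc0 : c 0 ≤ deg c :=
        Finset.single_le_sum (f := fun j => c j) (fun _ _ => Nat.zero_le _) (Finset.mem_univ 0)
      have : deg (a + (c - Finsupp.single 0 k)) = deg c := by
        rw [deg_add, hk, deg_sub hkc]
        omega
      rw [this]

lemma single_sub_self (k : ℕ) :
    (Finsupp.single (0 : Fin (n+1)) k - Finsupp.single 0 k : Fin (n+1) →₀ ℕ) = 0 := by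
  simp

lemma central_scalar {x : Module.End ℂ (PolyN n)} (hx : x ∈ weylDE n)
    (hc : ∀ y ∈ weylDE n, x * y = y * x) (a : Fin (n+1) →₀ ℕ) :
    x (monomial a 1)
      = (coeff (Finsupp.single 0 (deg a)) (x (monomial (Finsupp.single 0 (deg a)) 1)))
          • monomial a 1 := by
  set k := deg a with hk
  set q : PolyN n := x (monomial (Finsupp.single 0 k) 1) with hq
  have hxE : eulerOp n * x = x * eulerOp n :=
    (Algebra.mem_inf.mp hx).2 (eulerOp n) rfl
  have hEq : eulerOp n q = (k : ℂ) • q := by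
    have h1 := DFunLike.congr_fun hxE (monomial (Finsupp.single (0 : Fin (n+1)) k) 1)
    rw [Module.End.mul_apply, Module.End.mul_apply, eulerOp_monomial, deg_single, map_smul] at h1
    exact h1
  have hsupp := support_deg_of_euler_eig hEq
  have hdk : (dOp n 0 ^ k) q
      = monomial 0 (coeff (Finsupp.single 0 k) q * (Nat.factorial k : ℂ)) := by
    conv_lhs => rw [q.as_sum, map_sum]
    rw [Finset.sum_congr rfl (fun c _ => dOp_pow_monomial 0 k c (coeff c q))]
    rw [Finset.sum_eq_single (Finsupp.single (0 : Fin (n+1)) k)]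
    · rw [single_sub_self]
      simp [Nat.descFactorial_self]
    · intro c hcs hne
      have hlt : c 0 < k := c0_lt (hsupp c hcs) hne
      rw [Nat.descFactorial_of_lt hlt]
      simp
    · intro hns
      rw [notMem_support_iff.mp hns]
      simp
  have huE := hc (uOp n a k) (uOp_mem_weylDE a k hk.symm)
  have happ := DFunLike.congr_fun huE (monomial (Finsupp.single (0 : Fin (n+1)) k) 1)
  rw [Module.End.mul_apply, Module.End.mul_apply, uOp_monomial, single_sub_self, add_zero,
      Finsupp.single_eq_same, Nat.descFactorial_self, one_mul] at happ
  rw [show (monomial a ((Nat.factorial k : ℕ) : ℂ)) = (Nat.factorial k : ℂ) • monomial a 1 by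
        rw [smul_monomial, smul_eq_mul, mul_one]] at happ
  rw [map_smul] at happ
  rw [show uOp n a k q = (coeff (Finsupp.single 0 k) q * (Nat.factorial k : ℂ)) • monomial a 1 by
        rw [uOp, Module.End.mul_apply, hdk, LinearMap.mulLeft_apply, monomial_mul, add_zero,
          one_mul, smul_monomial, smul_eq_mul, mul_one]] at happ
  rw [mul_comm, mul_smul] at happ
  have hfac : ((Nat.factorial k : ℕ) : ℂ) ≠ 0 := by
    exact_mod_cast Nat.factorial_ne_zero k
  exact smul_right_injective (PolyN n) hfac happ

/-- Normal-form claim along powers of `X 0`. -/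
def Pclaim (n : ℕ) (d : Module.End ℂ (PolyN n)) : Prop :=
  ∃ m : ℕ, ∃ F : ℕ → Module.End ℂ (PolyN n), (∀ j, m < j → F j = 0) ∧
    ∀ (k : ℕ) (g : PolyN n),
      d ((X 0 : PolyN n) ^ k * g) = ∑ j ∈ Finset.range (m+1),
        (k.descFactorial j : ℂ) • ((X 0 : PolyN n) ^ (k - j) * F j g)

lemma sum_extend {m m' : ℕ} (hmm : m ≤ m') {F : ℕ → Module.End ℂ (PolyN n)}
    (hF : ∀ j, m < j → F j = 0) (k : ℕ) (g : PolyN n) :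
    ∑ j ∈ Finset.range (m+1), (k.descFactorial j : ℂ) • ((X 0 : PolyN n) ^ (k - j) * F j g)
      = ∑ j ∈ Finset.range (m'+1),
          (k.descFactorial j : ℂ) • ((X 0 : PolyN n) ^ (k - j) * F j g) := by
  refine Finset.sum_subset (by intro t ht; simp at ht ⊢; omega) ?_
  intro j _ hj
  have : m < j := by simp at hj; omega
  rw [hF j this]
  simp

lemma pderiv_X0_pow (k : ℕ) :
    pderiv (0 : Fin (n+1)) ((X 0 : PolyN n) ^ k)
      = (k : ℂ) • (X 0 : PolyN n) ^ (k - 1) := by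
  rw [X_pow_eq_monomial, pderiv_monomial, Finsupp.single_eq_same, X_pow_eq_monomial]
  rw [show Finsupp.single (0 : Fin (n+1)) k - Finsupp.single 0 1 = Finsupp.single 0 (k-1) by
        rw [← Finsupp.single_tsub]]
  rw [smul_monomial, one_mul, smul_eq_mul, mul_one]

lemma pderiv_X0_pow_ne (i : Fin (n+1)) (hi : i ≠ 0) (k : ℕ) :
    pderiv i ((X 0 : PolyN n) ^ k) = 0 := by
  rw [X_pow_eq_monomial, pderiv_monomial, Finsupp.single_apply, if_neg (fun h => hi h.symm)]
  simp

lemma pclaim_of_mem_weylD {d : Module.End ℂ (PolyN n)} (hd : d ∈ weylD n) : Pclaim n d := by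
  induction hd using Algebra.adjoin_induction with
  | mem g hg =>
    rcases hg with ⟨i, rfl⟩ | ⟨i, rfl⟩
    · -- tOp
      refine ⟨0, fun j => if j = 0 then tOp n i else 0,
        fun j hj => by simp [show j ≠ 0 by omega], ?_⟩
      intro k g
      rw [Finset.sum_range_one]
      simp only [if_pos rfl, if_true, eq_self_iff_true, Nat.descFactorial_zero, Nat.cast_one,
        one_smul, Nat.sub_zero, tOp, LinearMap.mulLeft_apply]
      ring
    · -- dOp
      by_cases hi : i = 0
      · subst hi
        refine ⟨1, fun j => if j = 0 then dOp n 0 else if j = 1 then LinearMap.id else 0,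
          fun j hj => by simp [show j ≠ 0 by omega, show j ≠ 1 by omega], ?_⟩
        intro k g
        rw [show (1:ℕ)+1 = 2 by rfl, Finset.sum_range_succ, Finset.sum_range_one]
        simp only [if_pos rfl, if_true, eq_self_iff_true, if_neg one_ne_zero,
          Nat.descFactorial_zero, Nat.descFactorial_one, Nat.cast_one, one_smul, Nat.sub_zero,
          LinearMap.id_coe, id_eq]
        rw [show (dOp n 0) ((X 0 : PolyN n) ^ k * g) = pderiv 0 ((X 0 : PolyN n) ^ k * g)
              from rfl, pderiv_mul, pderiv_X0_pow]
        rw [show (dOp n 0) g = pderiv 0 g from rfl]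
        rw [smul_mul_assoc, add_comm]
      · refine ⟨0, fun j => if j = 0 then dOp n i else 0,
          fun j hj => by simp [show j ≠ 0 by omega], ?_⟩
        intro k g
        rw [Finset.sum_range_one]
        simp only [if_pos rfl, if_true, eq_self_iff_true, Nat.descFactorial_zero, Nat.cast_one,
          one_smul, Nat.sub_zero]
        rw [show (dOp n i) ((X 0 : PolyN n) ^ k * g) = pderiv i ((X 0 : PolyN n) ^ k * g)
              from rfl, pderiv_mul, pderiv_X0_pow_ne i hi, zero_mul, zero_add]
        rfl
  | algebraMap r =>
    refine ⟨0, fun j => if j = 0 then algebraMap ℂ _ r else 0,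
      fun j hj => by simp [show j ≠ 0 by omega], ?_⟩
    intro k g
    rw [Finset.sum_range_one]
    simp [Module.algebraMap_end_apply, mul_smul_comm]
  | add p q hp hq ihp ihq =>
    obtain ⟨mp, Fp, hFp0, hFp⟩ := ihp
    obtain ⟨mq, Fq, hFq0, hFq⟩ := ihq
    refine ⟨max mp mq, fun j => Fp j + Fq j,
      fun j hj => by
        show Fp j + Fq j = 0
        rw [hFp0 j (by omega), hFq0 j (by omega), add_zero], ?_⟩
    intro k g
    rw [LinearMap.add_apply, hFp k g, hFq k g,
      sum_extend (le_max_left mp mq) hFp0 k g, sum_extend (le_max_right mp mq) hFq0 k g,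
      ← Finset.sum_add_distrib]
    refine Finset.sum_congr rfl fun j _ => ?_
    show _ = (k.descFactorial j : ℂ) • ((X 0 : PolyN n) ^ (k-j) * (Fp j + Fq j) g)
    rw [LinearMap.add_apply, mul_add, smul_add]
  | mul p q hp hq ihp ihq =>
    obtain ⟨mp, Fp, hFp0, hFp⟩ := ihp
    obtain ⟨mq, Fq, hFq0, hFq⟩ := ihq
    refine ⟨mp + mq, fun s => ∑ i ∈ Finset.range (mp+1), ∑ j ∈ Finset.range (mq+1),
      if i + j = s then Fp i * Fq j else 0, ?_, ?_⟩
    · intro s hs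
      show (∑ i ∈ Finset.range (mp+1), ∑ j ∈ Finset.range (mq+1),
        if i + j = s then Fp i * Fq j else 0) = 0
      refine Finset.sum_eq_zero fun i hi => Finset.sum_eq_zero fun j hj => ?_
      simp only [Finset.mem_range] at hi hj
      exact if_neg (by omega)
    · intro k g
      rw [Module.End.mul_apply, hFq k g, map_sum]
      have hterm : ∀ j ∈ Finset.range (mq+1),
          p ((k.descFactorial j : ℂ) • ((X 0 : PolyN n) ^ (k - j) * Fq j g))
            = ∑ i ∈ Finset.range (mp+1),
                ((k.descFactorial (i+j) : ℂ)) • ((X 0 : PolyN n) ^ (k - (i+j))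
                  * Fp i (Fq j g)) := by
        intro j _
        rw [map_smul, hFp (k - j) (Fq j g), Finset.smul_sum]
        refine Finset.sum_congr rfl fun i _ => ?_
        rw [smul_smul, ← Nat.cast_mul]
        rw [show k.descFactorial j * (k - j).descFactorial i = k.descFactorial (i + j) by
              rw [mul_comm]
              have h5 := Nat.descFactorial_mul_descFactorial (k := j) (m := j + i) (n := k)
                (by omega)
              rw [show j + i - j = i by omega] at h5
              rw [show i + j = j + i by omega]
              exact h5]
        rw [tsub_tsub, show j + i = i + j by omega]
      rw [Finset.sum_congr rfl hterm]
      have hR : ∀ s, ((∑ i ∈ Finset.range (mp+1), ∑ j ∈ Finset.range (mq+1),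
          if i + j = s then Fp i * Fq j else 0) g)
            = ∑ i ∈ Finset.range (mp+1), ∑ j ∈ Finset.range (mq+1),
                (if i + j = s then Fp i (Fq j g) else 0) := by
        intro s
        rw [LinearMap.sum_apply]
        refine Finset.sum_congr rfl fun i _ => ?_
        rw [LinearMap.sum_apply]
        refine Finset.sum_congr rfl fun j _ => ?_
        by_cases h : i + j = s
        · rw [if_pos h, if_pos h, Module.End.mul_apply]
        · rw [if_neg h, if_neg h, LinearMap.zero_apply]
      have hRHS : (∑ s ∈ Finset.range (mp+mq+1), (k.descFactorial s : ℂ)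
            • ((X 0 : PolyN n) ^ (k-s) * (∑ i ∈ Finset.range (mp+1),
                ∑ j ∈ Finset.range (mq+1), if i + j = s then Fp i * Fq j else 0) g))
          = ∑ i ∈ Finset.range (mp+1), ∑ j ∈ Finset.range (mq+1),
              (k.descFactorial (i+j) : ℂ) • ((X 0 : PolyN n) ^ (k-(i+j)) * Fp i (Fq j g)) := by
        calc (∑ s ∈ Finset.range (mp+mq+1), (k.descFactorial s : ℂ)
            • ((X 0 : PolyN n) ^ (k-s) * (∑ i ∈ Finset.range (mp+1),
                ∑ j ∈ Finset.range (mq+1), if i + j = s then Fp i * Fq j else 0) g))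
            = ∑ s ∈ Finset.range (mp+mq+1), ∑ i ∈ Finset.range (mp+1),
                ∑ j ∈ Finset.range (mq+1), (if i + j = s then
                  (k.descFactorial s : ℂ) • ((X 0 : PolyN n) ^ (k-s) * Fp i (Fq j g))
                  else 0) := by
              refine Finset.sum_congr rfl fun s _ => ?_
              rw [hR s, Finset.mul_sum, Finset.smul_sum]
              refine Finset.sum_congr rfl fun i _ => ?_
              rw [Finset.mul_sum, Finset.smul_sum]
              refine Finset.sum_congr rfl fun j _ => ?_
              by_cases h : i + j = s
              · rw [if_pos h, if_pos h]
              · rw [if_neg h, if_neg h, mul_zero, smul_zero]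
          _ = ∑ i ∈ Finset.range (mp+1), ∑ s ∈ Finset.range (mp+mq+1),
                ∑ j ∈ Finset.range (mq+1), (if i + j = s then
                  (k.descFactorial s : ℂ) • ((X 0 : PolyN n) ^ (k-s) * Fp i (Fq j g))
                  else 0) := Finset.sum_comm
          _ = ∑ i ∈ Finset.range (mp+1), ∑ j ∈ Finset.range (mq+1),
                ∑ s ∈ Finset.range (mp+mq+1), (if i + j = s then
                  (k.descFactorial s : ℂ) • ((X 0 : PolyN n) ^ (k-s) * Fp i (Fq j g))
                  else 0) := by
              exact Finset.sum_congr rfl fun i _ => Finset.sum_comm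
          _ = ∑ i ∈ Finset.range (mp+1), ∑ j ∈ Finset.range (mq+1),
              (k.descFactorial (i+j) : ℂ) • ((X 0 : PolyN n) ^ (k-(i+j)) * Fp i (Fq j g)) := by
              refine Finset.sum_congr rfl fun i hi => Finset.sum_congr rfl fun j hj => ?_
              simp only [Finset.mem_range] at hi hj
              rw [Finset.sum_ite_eq (Finset.range (mp+mq+1)) (i+j),
                if_pos (Finset.mem_range.mpr (by omega))]
      rw [hRHS, Finset.sum_comm]

lemma euler_pow_eig {k : ℕ} {v : PolyN n} (hv : eulerOp n v = (k:ℂ) • v) (j : ℕ) :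
    ((eulerOp n)^j) v = ((k:ℂ)^j) • v := by
  induction j with
  | zero => simp
  | succ j ih =>
    rw [pow_succ, Module.End.mul_apply, hv, map_smul, ih, smul_smul, ← pow_succ']

lemma aeval_euler_eig {k : ℕ} {v : PolyN n} (hv : eulerOp n v = (k:ℂ) • v) (p : Polynomial ℂ) :
    (Polynomial.aeval (eulerOp n) p) v = (Polynomial.eval (k:ℂ) p) • v := by
  induction p using Polynomial.induction_on' with
  | add p q hp hq => simp [hp, hq, add_smul]
  | monomial j a =>
    rw [Polynomial.aeval_monomial, Polynomial.eval_monomial, Module.End.mul_apply,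
      euler_pow_eig hv, map_smul, Module.algebraMap_end_apply, smul_smul, mul_comm]

lemma cast_descFactorial (k j : ℕ) :
    (k.descFactorial j : ℂ) = ∏ i ∈ Finset.range j, ((k:ℂ) - (i:ℂ)) := by
  rcases le_or_gt j k with h | h
  · rw [Nat.descFactorial_eq_prod_range, Nat.cast_prod]
    refine Finset.prod_congr rfl fun i hi => ?_
    have hik : i ≤ k := le_trans (le_of_lt (Finset.mem_range.mp hi)) h
    exact Nat.cast_sub hik
  · rw [Nat.descFactorial_eq_zero_iff_lt.mpr h, Nat.cast_zero]
    symm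
    apply Finset.prod_eq_zero (Finset.mem_range.mpr h)
    simp

theorem center_eq_polyE (n : ℕ) :
    ∀ x : Module.End ℂ (PolyN n),
      (x ∈ weylDE n ∧ ∀ y ∈ weylDE n, x * y = y * x) ↔
        x ∈ Algebra.adjoin ℂ {eulerOp n} := by
  intro x
  constructor
  · rintro ⟨hx, hcomm⟩
    set lam : ℕ → ℂ := fun k =>
      coeff (Finsupp.single 0 k) (x (monomial (Finsupp.single 0 k) 1)) with hlamdef
    have hsc : ∀ a : Fin (n+1) →₀ ℕ, x (monomial a 1) = lam (deg a) • monomial a 1 :=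
      central_scalar hx hcomm
    obtain ⟨m, F, hF0, hF⟩ := pclaim_of_mem_weylD (Algebra.mem_inf.mp hx).1
    have hlam : ∀ k, lam k = ∑ j ∈ Finset.range (m+1),
        (k.descFactorial j : ℂ) * coeff (Finsupp.single 0 j) (F j 1) := by
      intro k
      have h1 := hF k 1
      rw [mul_one] at h1
      have h2 : x ((X 0 : PolyN n)^k) = lam k • (X 0 : PolyN n)^k := by
        rw [X_pow_eq_monomial]
        have := hsc (Finsupp.single 0 k)
        rwa [deg_single] at this
      rw [h2] at h1
      have h3 := congrArg (coeff (Finsupp.single (0 : Fin (n+1)) k)) h1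
      rw [coeff_smul, X_pow_eq_monomial, coeff_monomial, if_pos rfl, smul_eq_mul, mul_one,
        coeff_sum] at h3
      rw [h3]
      refine Finset.sum_congr rfl fun j _ => ?_
      rw [coeff_smul, smul_eq_mul]
      rcases le_or_gt j k with hjk | hjk
      · congr 1
        rw [X_pow_eq_monomial, coeff_monomial_mul',
          if_pos (by rw [Finsupp.single_le_iff, Finsupp.single_eq_same]; omega),
          one_mul, ← Finsupp.single_tsub]
        congr 2
        omega
      · rw [show ((k.descFactorial j : ℕ) : ℂ) = 0 by
              rw [Nat.descFactorial_eq_zero_iff_lt.mpr hjk, Nat.cast_zero],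
          zero_mul, zero_mul]
    obtain ⟨pE, hpE⟩ : ∃ p : Polynomial ℂ, p = ∑ j ∈ Finset.range (m+1),
        Polynomial.C (coeff (Finsupp.single 0 j) (F j 1))
          * ∏ i ∈ Finset.range j, (Polynomial.X - Polynomial.C (i:ℂ)) := ⟨_, rfl⟩
    have hxy : x = Polynomial.aeval (eulerOp n) pE := by
      refine lhom_ext_mon fun c r => ?_
      have hmon : (monomial c r : PolyN n) = r • monomial c 1 := by
        rw [smul_monomial, smul_eq_mul, mul_one]
      have heig : eulerOp n (monomial c (1:ℂ)) = ((deg c : ℕ) : ℂ) • monomial c 1 :=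
        eulerOp_monomial c 1
      rw [hmon, map_smul, map_smul, hsc c, aeval_euler_eig heig]
      congr 1
      rw [hlam (deg c)]
      rw [hpE]
      rw [Polynomial.eval_finset_sum]
      congr 1
      refine Finset.sum_congr rfl fun j _ => ?_
      rw [Polynomial.eval_mul, Polynomial.eval_C, Polynomial.eval_prod]
      rw [cast_descFactorial, mul_comm]
      congr 1
      exact Finset.prod_congr rfl fun i _ => by rw [Polynomial.eval_sub, Polynomial.eval_X,
        Polynomial.eval_C]
    rw [hxy]
    exact Polynomial.aeval_mem_adjoin_singleton ℂ _
  · intro hx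
    have hsub : Algebra.adjoin ℂ {eulerOp n} ≤ weylDE n := by
      rw [Algebra.adjoin_le_iff]
      intro g hg
      rw [Set.mem_singleton_iff] at hg; subst hg
      refine Algebra.mem_inf.mpr ⟨eulerOp_mem, ?_⟩
      rw [Subalgebra.mem_centralizer_iff]
      rintro g hg; rw [Set.mem_singleton_iff] at hg; subst hg; rfl
    have hcen : Algebra.adjoin ℂ {eulerOp n}
        ≤ Subalgebra.centralizer ℂ (weylDE n : Set (Module.End ℂ (PolyN n))) := by
      rw [Algebra.adjoin_le_iff]
      intro g hg; rw [Set.mem_singleton_iff] at hg; subst hg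
      rw [SetLike.mem_coe, Subalgebra.mem_centralizer_iff]
      intro y hy
      have hy2 : y ∈ Subalgebra.centralizer ℂ {eulerOp n} :=
        (Algebra.mem_inf.mp hy).2
      exact ((Subalgebra.mem_centralizer_iff (R := ℂ)).mp hy2 (eulerOp n) rfl).symm
    exact ⟨hsub hx, fun y hy =>
      ((Subalgebra.mem_centralizer_iff (R := ℂ)).mp (hcen hx) y hy).symm⟩

/-- for `n ≥ 1`, the center of `D^E` is the polynomial algebra
`ℂ[E]` generated by the Euler vector field. -/
theorem center_of_euler_centralizer (n : ℕ) (hn : 1 ≤ n) :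
    ∀ x : Module.End ℂ (PolyN n),
      (x ∈ weylDE n ∧ ∀ y ∈ weylDE n, x * y = y * x) ↔
        x ∈ Algebra.adjoin ℂ {eulerOp n} := by
  intro x
  exact center_eq_polyE n x
end

section
/- Let D = D(1), ν ∈ C \ Z, and F_ν^{log} = F_ν ⊗ C[u] where the D(1)-action is the natural one on t^ν C[t,t^{−1},u] with u = log t (i.e., ∂ acts by the formal derivative treating ∂u/∂t = 1/t). Then the endomorphism ring End_D(F_ν^{log}) is isomorphic to the formal power series ring C[[z]], with z acting as ∂/∂u. -/
/- The `D(1)`-module `F_ν^{log} = t^ν ℂ[t,t⁻¹] ⊗ ℂ[u]`, `u = log t`, with basis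
`{t^{ν+k} u^m | k ∈ ℤ, m ∈ ℕ}` modelled by `(ℤ × ℕ) →₀ ℂ`
(`single (k, m) 1` stands for `t^{ν+k} u^m`). -/

abbrev FnuLog := (ℤ × ℕ) →₀ ℂ

/-- The action of `t`: `t • t^{ν+k} u^m = t^{ν+k+1} u^m`. -/
noncomputable def tAct : FnuLog →ₗ[ℂ] FnuLog :=
  Finsupp.lmapDomain ℂ ℂ (fun p => (p.1 + 1, p.2))

/-- The action of `∂` (with `∂u/∂t = 1/t`):
`∂ • t^{ν+k} u^m = (ν+k) t^{ν+k-1} u^m + m t^{ν+k-1} u^{m-1}`. -/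
noncomputable def dAct (ν : ℂ) : FnuLog →ₗ[ℂ] FnuLog :=
  Finsupp.lsum ℂ fun p =>
    LinearMap.toSpanSingleton ℂ FnuLog
      ((ν + (p.1 : ℂ)) • Finsupp.single (p.1 - 1, p.2) (1 : ℂ) +
        (p.2 : ℂ) • Finsupp.single (p.1 - 1, p.2 - 1) (1 : ℂ))

/-- The operator `∂/∂u`: `t^{ν+k} u^m ↦ m t^{ν+k} u^{m-1}`. -/
noncomputable def duAct : Module.End ℂ FnuLog :=
  Finsupp.lsum ℂ fun p =>
    LinearMap.toSpanSingleton ℂ FnuLog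
      ((p.2 : ℂ) • Finsupp.single (p.1, p.2 - 1) (1 : ℂ))

/-!
`∂/∂u` lowers the `u`-degree, so it is locally nilpotent and a power series `f` acts as
`f(∂/∂u)` through its truncation at the `u`-degree of the vector it is applied to. These
operators commute with `t` and `∂`, since both commute with `∂/∂u` and do not raise the
`u`-degree; and `f ↦ f(∂/∂u)` is injective because `f(∂/∂u)(t^ν u^n)` has coefficient `n! fₙ`
at `t^ν`.

Conversely, subtracting a suitable `f(∂/∂u)` from an endomorphism `T` leaves an `R` whose
`t^ν`-coefficient on every `t^ν u^m` vanishes. The Euler operator `θ = t∂` acts on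
`t^{ν+k} u^m` as `(ν + k) + ∂/∂u`, so by induction on `m` each `R(t^{ν+k} u^m)` is a
`(ν + k)`-eigenvector of `θ`, i.e. a multiple of `t^{ν+k}`; commuting with `t` makes this
multiple independent of `k`, and it vanishes at `k = 0`.
-/

open Finsupp Polynomial
open scoped PowerSeries

lemma commute_aeval {R A : Type*} [CommSemiring R] [Semiring A] [Algebra R A] {a x : A}
    (h : Commute a x) (p : R[X]) : Commute a (aeval x p) := by
  induction p using Polynomial.induction_on' with
  | add p q hp hq => simpa using hp.add_right hq
  | monomial n c =>
    rw [aeval_monomial]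
    exact (Algebra.commute_algebraMap_right c a).mul_right (h.pow_right n)

lemma X_pow_dvd_trunc_sub {R : Type*} [CommRing R] {N : ℕ} {φ : R⟦X⟧} {p : R[X]}
    (h : PowerSeries.trunc N φ = PowerSeries.trunc N (p : R⟦X⟧)) :
    X ^ N ∣ PowerSeries.trunc N φ - p := by
  refine X_pow_dvd_iff.mpr fun d hd => ?_
  rw [coeff_sub, h, PowerSeries.coeff_trunc, if_pos hd, coeff_coe, sub_self]

lemma fnuLog_end_ext {A B : Module.End ℂ FnuLog}
    (h : ∀ k m, A (single (k, m) 1) = B (single (k, m) 1)) : A = B :=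
  Finsupp.basisSingleOne.ext fun p => by simpa using h p.1 p.2

lemma tAct_single (k : ℤ) (m : ℕ) (c : ℂ) : tAct (single (k, m) c) = single (k + 1, m) c := by
  simp [tAct]

lemma dAct_single (ν : ℂ) (k : ℤ) (m : ℕ) :
    dAct ν (single (k, m) 1) =
      (ν + k) • single (k - 1, m) 1 + (m : ℂ) • single (k - 1, m - 1) 1 := by
  simp [dAct]

lemma duAct_single (k : ℤ) (m : ℕ) :
    duAct (single (k, m) 1) = (m : ℂ) • single (k, m - 1) 1 := by
  simp [duAct]

lemma duAct_pow_single (k : ℤ) (m n : ℕ) :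
    (duAct ^ n) (single (k, m) 1) = (m.descFactorial n : ℂ) • single (k, m - n) 1 := by
  induction n with
  | zero => simp
  | succ n ih =>
    rw [pow_succ', Module.End.mul_apply, ih, map_smul, duAct_single, smul_smul, ← Nat.cast_mul,
      mul_comm (m.descFactorial n), ← Nat.descFactorial_succ, Nat.sub_sub]

lemma duAct_apply (y : FnuLog) (a : ℤ) (b : ℕ) : duAct y (a, b) = (b + 1) * y (a, b + 1) := by
  induction y using Finsupp.induction_linear with
  | zero => simp
  | add f g hf hg => simp [hf, hg, mul_add]
  | single p c =>
    obtain ⟨k, _ | m⟩ := p <;> rw [← smul_single_one, map_smul, duAct_single]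
    · simp
    · simp only [Finsupp.smul_apply, single_apply, Prod.mk.injEq, smul_eq_mul,
        Nat.add_sub_cancel, add_left_inj]
      split_ifs with h
      · obtain ⟨rfl, rfl⟩ := h; push_cast; ring
      · simp

lemma commute_tAct_duAct : Commute (tAct : Module.End ℂ FnuLog) duAct :=
  fnuLog_end_ext fun k m => by
    simp only [Module.End.mul_apply, duAct_single, map_smul, tAct_single]

lemma commute_dAct_duAct (ν : ℂ) : Commute (dAct ν : Module.End ℂ FnuLog) duAct :=
  fnuLog_end_ext fun k m => by
    simp only [Module.End.mul_apply, duAct_single, dAct_single, map_add, map_smul, smul_add,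
      smul_smul, mul_comm]

def uDegLT (N : ℕ) : Submodule ℂ FnuLog := supported ℂ ℂ {p | p.2 < N}

lemma single_mem_uDegLT {k : ℤ} {m N : ℕ} (c : ℂ) (h : m < N) : single (k, m) c ∈ uDegLT N :=
  single_mem_supported ℂ c h

lemma uDegLT_le_comap_of_single {T : Module.End ℂ FnuLog} {W : Submodule ℂ FnuLog} {N : ℕ}
    (h : ∀ k, ∀ m < N, T (single (k, m) 1) ∈ W) : uDegLT N ≤ W.comap T := by
  rw [uDegLT, supported_eq_span_single, Submodule.span_le]
  rintro _ ⟨⟨k, m⟩, hm, rfl⟩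
  exact h k m hm

lemma uDegLT_le_comap_tAct (N : ℕ) : uDegLT N ≤ (uDegLT N).comap tAct := by
  refine uDegLT_le_comap_of_single fun k m hm => ?_
  rw [tAct_single]
  exact single_mem_uDegLT 1 hm

lemma uDegLT_le_comap_dAct (ν : ℂ) (N : ℕ) : uDegLT N ≤ (uDegLT N).comap (dAct ν) := by
  refine uDegLT_le_comap_of_single fun k m hm => ?_
  rw [dAct_single]
  exact add_mem (Submodule.smul_mem _ _ (single_mem_uDegLT 1 hm))
    (Submodule.smul_mem _ _ (single_mem_uDegLT 1 (by omega)))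

lemma uDegLT_le_comap_duAct (N : ℕ) : uDegLT N ≤ (uDegLT N).comap duAct := by
  refine uDegLT_le_comap_of_single fun k m hm => ?_
  rw [duAct_single]
  exact Submodule.smul_mem _ _ (single_mem_uDegLT 1 (by omega))

lemma uDegLT_le_ker_duAct_pow (N : ℕ) : uDegLT N ≤ LinearMap.ker (duAct ^ N) := by
  rw [← Submodule.comap_bot]
  refine uDegLT_le_comap_of_single fun k m hm => ?_
  rw [duAct_pow_single, Nat.descFactorial_eq_zero_iff_lt.mpr hm, Nat.cast_zero, zero_smul]
  exact Submodule.zero_mem _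

lemma aeval_duAct_apply_eq_of_X_pow_dvd_sub {p q : ℂ[X]} {N : ℕ} (h : X ^ N ∣ p - q)
    {v : FnuLog} (hv : v ∈ uDegLT N) : aeval duAct p v = aeval duAct q v := by
  obtain ⟨r, hr⟩ := h
  have hdiff : aeval duAct (p - q) v = 0 := by
    rw [hr, mul_comm, map_mul, Module.End.mul_apply, map_pow, aeval_X,
      LinearMap.mem_ker.mp (uDegLT_le_ker_duAct_pow N hv), map_zero]
  rwa [map_sub, LinearMap.sub_apply, sub_eq_zero] at hdiff

noncomputable def powerSeriesEval (f : ℂ⟦X⟧) : Module.End ℂ FnuLog :=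
  Finsupp.lsum ℂ fun p =>
    LinearMap.toSpanSingleton ℂ FnuLog (aeval duAct (PowerSeries.trunc (p.2 + 1) f) (single p 1))

lemma powerSeriesEval_single (f : ℂ⟦X⟧) (k : ℤ) (m : ℕ) :
    powerSeriesEval f (single (k, m) 1) =
      aeval duAct (PowerSeries.trunc (m + 1) f) (single (k, m) 1) := by
  simp [powerSeriesEval]

lemma powerSeriesEval_apply_of_mem (f : ℂ⟦X⟧) {N : ℕ} {v : FnuLog} (hv : v ∈ uDegLT N) :
    powerSeriesEval f v = aeval duAct (PowerSeries.trunc N f) v := by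
  rw [uDegLT, supported_eq_span_single] at hv
  refine LinearMap.eqOn_span' (f := powerSeriesEval f)
    (g := aeval duAct (PowerSeries.trunc N f)) ?_ hv
  rintro _ ⟨⟨k, m⟩, hm, rfl⟩
  show powerSeriesEval f (single (k, m) 1) = aeval duAct (PowerSeries.trunc N f) (single (k, m) 1)
  have hdvd : X ^ (m + 1) ∣ PowerSeries.trunc (m + 1) f - PowerSeries.trunc N f :=
    X_pow_dvd_trunc_sub (PowerSeries.trunc_trunc_of_le f hm).symm
  rw [powerSeriesEval_single]
  exact aeval_duAct_apply_eq_of_X_pow_dvd_sub hdvd (single_mem_uDegLT 1 m.lt_add_one)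

lemma commute_powerSeriesEval {T : Module.End ℂ FnuLog} (hT : Commute T duAct)
    (hdeg : ∀ N, uDegLT N ≤ (uDegLT N).comap T) (f : ℂ⟦X⟧) :
    Commute T (powerSeriesEval f) := by
  refine fnuLog_end_ext fun k m => ?_
  have he := single_mem_uDegLT (k := k) 1 m.lt_add_one
  rw [Module.End.mul_apply, Module.End.mul_apply, powerSeriesEval_single,
    powerSeriesEval_apply_of_mem f (hdeg _ he)]
  exact LinearMap.congr_fun (commute_aeval (A := Module.End ℂ FnuLog) hT _).eq _

lemma commute_tAct_powerSeriesEval (f : ℂ⟦X⟧) : Commute tAct (powerSeriesEval f) :=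
  commute_powerSeriesEval commute_tAct_duAct uDegLT_le_comap_tAct f

lemma commute_dAct_powerSeriesEval (ν : ℂ) (f : ℂ⟦X⟧) : Commute (dAct ν) (powerSeriesEval f) :=
  commute_powerSeriesEval (commute_dAct_duAct ν) (uDegLT_le_comap_dAct ν) f

lemma powerSeriesEval_mul (f g : ℂ⟦X⟧) :
    powerSeriesEval (f * g) = powerSeriesEval f * powerSeriesEval g := by
  refine fnuLog_end_ext fun k m => ?_
  set tf := PowerSeries.trunc (m + 1) f
  set tg := PowerSeries.trunc (m + 1) g
  have hfg : X ^ (m + 1) ∣ PowerSeries.trunc (m + 1) (f * g) - tg * tf := by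
    refine X_pow_dvd_trunc_sub ?_
    rw [Polynomial.coe_mul, mul_comm, PowerSeries.trunc_trunc_mul_trunc]
  have hf : Commute (powerSeriesEval f) (aeval duAct tg) :=
    commute_aeval (A := Module.End ℂ FnuLog)
      (commute_powerSeriesEval (Commute.refl duAct) uDegLT_le_comap_duAct f).symm tg
  calc powerSeriesEval (f * g) (single (k, m) 1)
      = aeval duAct (tg * tf) (single (k, m) 1) := by
        rw [powerSeriesEval_single]
        exact aeval_duAct_apply_eq_of_X_pow_dvd_sub hfg (single_mem_uDegLT 1 m.lt_add_one)
    _ = aeval duAct tg (powerSeriesEval f (single (k, m) 1)) := by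
        rw [map_mul, powerSeriesEval_single]; rfl
    _ = powerSeriesEval f (powerSeriesEval g (single (k, m) 1)) := by
        rw [powerSeriesEval_single g]; exact (LinearMap.congr_fun hf.eq _).symm

noncomputable def powerSeriesEvalHom : ℂ⟦X⟧ →ₐ[ℂ] Module.End ℂ FnuLog where
  toFun := powerSeriesEval
  map_one' := fnuLog_end_ext fun k m => by simp [powerSeriesEval_single]
  map_mul' := powerSeriesEval_mul
  map_zero' := fnuLog_end_ext fun k m => by simp [powerSeriesEval_single]
  map_add' f g := fnuLog_end_ext fun k m => by simp [powerSeriesEval_single]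
  commutes' c := fnuLog_end_ext fun k m => by simp [powerSeriesEval_single]

lemma powerSeriesEval_X : powerSeriesEval PowerSeries.X = duAct :=
  fnuLog_end_ext fun k m => by
    rw [powerSeriesEval_apply_of_mem _ (single_mem_uDegLT (N := m + 2) 1 (by omega)),
      PowerSeries.trunc_X, aeval_X]

lemma powerSeriesEval_single_apply (f : ℂ⟦X⟧) (k : ℤ) (n : ℕ) :
    powerSeriesEval f (single (k, n) 1) (k, 0) = n.factorial * PowerSeries.coeff n f := by
  rw [powerSeriesEval_single, aeval_eq_sum_range' (PowerSeries.natDegree_trunc_lt f n),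
    LinearMap.sum_apply, finsetSum_apply, Finset.sum_eq_single n]
  · simp [duAct_pow_single, PowerSeries.coeff_trunc, Nat.descFactorial_self, mul_comm]
  · intro j hj hjn
    have hjn : n - j ≠ 0 := by simp at hj; omega
    simp [duAct_pow_single, hjn]
  · simp

lemma powerSeriesEval_injective : Function.Injective powerSeriesEval := by
  intro f g h
  ext n
  have hn := congr_arg (fun A : Module.End ℂ FnuLog => A (single (0, n) 1) (0, 0)) h
  simp only [powerSeriesEval_single_apply] at hn
  exact mul_left_cancel₀ (Nat.cast_ne_zero.mpr n.factorial_ne_zero) hn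

noncomputable def eulerAct (ν : ℂ) : Module.End ℂ FnuLog := tAct * dAct ν

lemma eulerAct_single (ν : ℂ) (k : ℤ) (m : ℕ) :
    eulerAct ν (single (k, m) 1) = (ν + k) • single (k, m) 1 + duAct (single (k, m) 1) := by
  rw [eulerAct, Module.End.mul_apply, dAct_single, map_add, map_smul, map_smul, tAct_single,
    tAct_single, sub_add_cancel, duAct_single]

lemma eulerAct_apply (ν : ℂ) (y : FnuLog) (a : ℤ) (b : ℕ) :
    eulerAct ν y (a, b) = (ν + a) * y (a, b) + duAct y (a, b) := by
  induction y using Finsupp.induction_linear with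
  | zero => simp
  | add f g hf hg => simp only [map_add, Finsupp.add_apply, hf, hg]; ring
  | single p c =>
    obtain ⟨k, m⟩ := p
    rw [← smul_single_one, map_smul, map_smul, eulerAct_single]
    simp only [smul_add, Finsupp.add_apply, Finsupp.smul_apply, single_apply, Prod.mk.injEq,
      smul_eq_mul]
    split_ifs with h
    · obtain ⟨rfl, rfl⟩ := h; ring
    · simp

lemma eq_smul_single_of_eulerAct_eq {ν : ℂ} {k : ℤ} {y : FnuLog}
    (hy : eulerAct ν y = (ν + k) • y) : y = y (k, 0) • single (k, 0) 1 := by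
  have hrec (a : ℤ) (b : ℕ) : ((b : ℂ) + 1) * y (a, b + 1) = (k - a) * y (a, b) := by
    have h := congr_arg (· (a, b)) hy
    simp only [eulerAct_apply, duAct_apply, Finsupp.smul_apply, smul_eq_mul] at h
    linear_combination h
  have hcol : ∀ a ≠ k, ∀ b, y (a, b) = 0 := by
    intro a ha
    have hfin : {b | y (a, b) ≠ 0}.Finite :=
      y.hasFiniteSupport.preimage (Prod.mk_right_injective a).injOn
    refine Nat.decreasing_induction_of_infinite (fun b hb => ?_)
      (by simpa only [Set.compl_ofPred, not_not] using hfin.infinite_compl)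
    have hka : (k - a : ℂ) ≠ 0 := sub_ne_zero.mpr (by exact_mod_cast ha.symm)
    have h := hrec a b
    rw [hb, mul_zero] at h
    exact (mul_eq_zero.mp h.symm).resolve_left hka
  have htop (b : ℕ) : y (k, b + 1) = 0 := by
    have h := hrec k b
    rw [sub_self, zero_mul] at h
    exact (mul_eq_zero.mp h).resolve_left (by exact_mod_cast b.succ_ne_zero)
  ext ⟨a, b⟩
  by_cases ha : a = k
  · subst ha
    rcases b with _ | b
    · simp
    · simp [htop b]
  · simp [hcol a ha, Ne.symm ha]

lemma apply_single_eq_zero_of_commute {ν : ℂ} {T : Module.End ℂ FnuLog} (ht : Commute tAct T)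
    (hθ : Commute (eulerAct ν) T) {m : ℕ} (hdu : ∀ k, T (duAct (single (k, m) 1)) = 0)
    (h0 : T (single (0, m) 1) (0, 0) = 0) (k : ℤ) : T (single (k, m) 1) = 0 := by
  have heig (k : ℤ) : T (single (k, m) 1) = T (single (k, m) 1) (k, 0) • single (k, 0) 1 := by
    refine eq_smul_single_of_eulerAct_eq (ν := ν) ?_
    rw [← Module.End.mul_apply, hθ.eq, Module.End.mul_apply, eulerAct_single, map_add, hdu,
      add_zero, map_smul]
  have hshift (k : ℤ) : T (single (k + 1, m) 1) (k + 1, 0) = T (single (k, m) 1) (k, 0) := by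
    rw [← tAct_single, ← Module.End.mul_apply, ← ht.eq, Module.End.mul_apply, heig k, map_smul,
      tAct_single]
    simp
  have hconst (k : ℤ) : T (single (k, m) 1) (k, 0) = 0 := by
    induction k using Int.induction_on with
    | zero => exact h0
    | succ i ih => rw [hshift, ih]
    | pred i ih =>
      have h := hshift (-i - 1)
      rw [sub_add_cancel] at h
      rw [← h, ih]
  rw [heig k, hconst k, zero_smul]

lemma eq_zero_of_commute {ν : ℂ} {T : Module.End ℂ FnuLog} (ht : Commute tAct T)
    (hd : Commute (dAct ν) T) (h0 : ∀ m, T (single (0, m) 1) (0, 0) = 0) : T = 0 := by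
  have hθ : Commute (eulerAct ν) T := ht.mul_left hd
  suffices h : ∀ m k, T (single (k, m) 1) = 0 from fnuLog_end_ext fun k m => by simp [h m k]
  intro m
  induction m with
  | zero => exact apply_single_eq_zero_of_commute ht hθ (by simp [duAct_single]) (h0 0)
  | succ m ih =>
    refine apply_single_eq_zero_of_commute ht hθ (fun k => ?_) (h0 (m + 1))
    rw [duAct_single, map_smul, Nat.add_sub_cancel, ih k, smul_zero]

lemma exists_powerSeriesEval_eq {ν : ℂ} {T : Module.End ℂ FnuLog} (ht : Commute tAct T)
    (hd : Commute (dAct ν) T) : ∃ f, powerSeriesEval f = T := by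
  set f : ℂ⟦X⟧ := PowerSeries.mk fun n => T (single (0, n) 1) (0, 0) / n.factorial
  have hcoeff (m : ℕ) : (T - powerSeriesEval f) (single (0, m) 1) (0, 0) = 0 := by
    rw [LinearMap.sub_apply, Finsupp.sub_apply, powerSeriesEval_single_apply,
      PowerSeries.coeff_mk, mul_div_cancel₀ _ (Nat.cast_ne_zero.mpr m.factorial_ne_zero),
      sub_self]
  have ht' : Commute tAct (T - powerSeriesEval f) :=
    Commute.sub_right (R := Module.End ℂ FnuLog) ht (commute_tAct_powerSeriesEval f)
  have hd' : Commute (dAct ν) (T - powerSeriesEval f) :=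
    Commute.sub_right (R := Module.End ℂ FnuLog) hd (commute_dAct_powerSeriesEval ν f)
  exact ⟨f, (sub_eq_zero.mp (eq_zero_of_commute ht' hd' hcoeff)).symm⟩

lemma mem_centralizer_tAct_dAct_iff {ν : ℂ} {T : Module.End ℂ FnuLog} :
    T ∈ Subalgebra.centralizer ℂ
        ({(tAct : Module.End ℂ FnuLog), (dAct ν : Module.End ℂ FnuLog)} :
          Set (Module.End ℂ FnuLog)) ↔
      Commute tAct T ∧ Commute (dAct ν) T := by
  simp only [Subalgebra.mem_centralizer_iff, Set.forall_mem_insert, Set.mem_singleton_iff,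
    forall_eq]
  rfl

theorem endRing_FnuLog_powerSeries_general (ν : ℂ) :
    ∃ e : PowerSeries ℂ ≃ₐ[ℂ]
        (Subalgebra.centralizer ℂ
          ({(tAct : Module.End ℂ FnuLog), (dAct ν : Module.End ℂ FnuLog)} :
            Set (Module.End ℂ FnuLog))),
      ((e (PowerSeries.X) : _) : Module.End ℂ FnuLog) = duAct := by
  let Φ := powerSeriesEvalHom.codRestrict _ fun f => mem_centralizer_tAct_dAct_iff.mpr
    ⟨commute_tAct_powerSeriesEval f, commute_dAct_powerSeriesEval ν f⟩
  have hinj : Function.Injective Φ := fun f g h =>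
    powerSeriesEval_injective (congr_arg Subtype.val h)
  have hsurj : Function.Surjective Φ := by
    rintro ⟨T, hT⟩
    obtain ⟨ht, hd⟩ := mem_centralizer_tAct_dAct_iff.mp hT
    obtain ⟨f, rfl⟩ := exists_powerSeriesEval_eq ht hd
    exact ⟨f, rfl⟩
  exact ⟨AlgEquiv.ofBijective Φ ⟨hinj, hsurj⟩, powerSeriesEval_X⟩

/-- for `ν ∉ ℤ`, the endomorphism ring `End_{D(1)}(F_ν^{log})`
(= the centralizer of the `t`- and `∂`-actions inside all ℂ-linear endomorphisms)
is isomorphic to the power series ring `ℂ[[z]]`, with `z` acting as `∂/∂u`. -/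
theorem endRing_FnuLog_powerSeries (ν : ℂ) (hν : ∀ k : ℤ, ν ≠ (k : ℂ)) :
    ∃ e : PowerSeries ℂ ≃ₐ[ℂ]
        (Subalgebra.centralizer ℂ
          ({(tAct : Module.End ℂ FnuLog), (dAct ν : Module.End ℂ FnuLog)} :
            Set (Module.End ℂ FnuLog))),
      ((e (PowerSeries.X) : _) : Module.End ℂ FnuLog) = duAct :=
  endRing_FnuLog_powerSeries_general ν
end

section
/- Let U be an associative algebra and F = {f_1,...,f_k} a set of pairwise commuting elements of U such that each ad(f_i) is locally nilpotent on U. Then the multiplicative set generated by F satisfies the left and right Ore conditions in U. -/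
private lemma pow_mul_key {U : Type*} [Ring U] (g : U) :
    ∀ N (u : U), (fun v => g * v - v * g)^[N] u = 0 → ∃ u', g ^ N * u = u' * g := by
  intro N
  induction N with
  | zero => intro u hu; simp only [Function.iterate_zero, id] at hu
            exact ⟨0, by simp [hu]⟩
  | succ N ih =>
    intro u hu
    rw [Function.iterate_succ_apply] at hu
    obtain ⟨v, hv⟩ := ih _ hu
    refine ⟨g ^ N * u + v, ?_⟩
    have h1 : g ^ (N+1) * u = g ^ N * (u * g) + g ^ N * (g * u - u * g) := by
      rw [pow_succ, mul_sub, mul_assoc]; abel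
    rw [h1, hv, ← mul_assoc, add_mul]

private lemma mul_pow_key {U : Type*} [Ring U] (g : U) :
    ∀ N (u : U), (fun v => g * v - v * g)^[N] u = 0 → ∃ u', u * g ^ N = g * u' := by
  intro N
  induction N with
  | zero => intro u hu; simp only [Function.iterate_zero, id] at hu
            exact ⟨0, by simp [hu]⟩
  | succ N ih =>
    intro u hu
    rw [Function.iterate_succ_apply] at hu
    obtain ⟨v, hv⟩ := ih _ hu
    refine ⟨u * g ^ N - v, ?_⟩
    have h1 : u * g ^ (N+1) = g * (u * g ^ N) - (g * u - u * g) * g ^ N := by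
      rw [pow_succ', sub_mul, ← mul_assoc, ← mul_assoc]; abel
    rw [h1, hv, mul_sub]

/-- if `F = {f 1, ..., f k}` is a set of pairwise commuting elements
of an associative algebra `U` such that each `ad (f i) : u ↦ f i * u - u * f i`
is locally nilpotent on `U`, then the multiplicative submonoid generated by `F`
satisfies the left and right Ore conditions. -/
theorem ore_condition_of_locally_ad_nilpotent {U : Type*} [Ring U] [Algebra ℂ U]
    (k : ℕ) (f : Fin k → U)
    (hcomm : ∀ i j, f i * f j = f j * f i)
    (hnil : ∀ i (u : U), ∃ N : ℕ,
      (fun v => f i * v - v * f i)^[N] u = 0) :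
    (∀ u : U, ∀ s ∈ Submonoid.closure (Set.range f),
        ∃ u' : U, ∃ s' ∈ Submonoid.closure (Set.range f), s' * u = u' * s) ∧
    (∀ u : U, ∀ s ∈ Submonoid.closure (Set.range f),
        ∃ u' : U, ∃ s' ∈ Submonoid.closure (Set.range f), u * s' = s * u') := by
  constructor
  · intro u s hs
    induction hs using Submonoid.closure_induction generalizing u with
    | mem x hx =>
      obtain ⟨i, rfl⟩ := hx
      obtain ⟨N, hN⟩ := hnil i u
      obtain ⟨u', hu'⟩ := pow_mul_key (f i) N u hN
      exact ⟨u', f i ^ N,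
        pow_mem (Submonoid.subset_closure (Set.mem_range_self i)) N, hu'⟩
    | one => exact ⟨u, 1, one_mem _, by rw [one_mul, mul_one]⟩
    | mul s t hs ht ihs iht =>
      obtain ⟨u₁, t', ht', h1⟩ := iht u
      obtain ⟨u₂, s', hs', h2⟩ := ihs u₁
      exact ⟨u₂, s' * t', mul_mem hs' ht',
        by rw [mul_assoc, h1, ← mul_assoc, h2, mul_assoc]⟩
  · intro u s hs
    induction hs using Submonoid.closure_induction generalizing u with
    | mem x hx =>
      obtain ⟨i, rfl⟩ := hx
      obtain ⟨N, hN⟩ := hnil i u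
      obtain ⟨u', hu'⟩ := mul_pow_key (f i) N u hN
      exact ⟨u', f i ^ N,
        pow_mem (Submonoid.subset_closure (Set.mem_range_self i)) N, hu'⟩
    | one => exact ⟨u, 1, one_mem _, by rw [one_mul, mul_one]⟩
    | mul s t hs ht ihs iht =>
      obtain ⟨u₁, s', hs', h1⟩ := ihs u
      obtain ⟨u₂, t', ht', h2⟩ := iht u₁
      exact ⟨u₂, s' * t', mul_mem hs' ht',
        by rw [← mul_assoc, h1, mul_assoc, h2, ← mul_assoc]⟩
end

section
/- Let U be an algebra, F a left Ore set of locally ad-nilpotent commuting elements, D_F the localization functor M ↦ D_F U ⊗_U M, and A a full subcategory of U-modules closed under the relevant constructions. If I is a D_F U-module that is injective in the category A_F of D_F U-modules lying in A, then I, regarded as a U-module, is injective in A. -/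
open Function

/-- Let `U` be an algebra, `F` a left Ore set of locally ad-nilpotent
commuting elements, with localization map `f : U →+* L = D_F U`, localization
functor `M ↦ D M` with localization maps `θ_M : M → D M` (semilinear over `f`)
satisfying the universal property and exactness (preservation of injections), and
let `𝒜` be a (full sub)category of `U`-modules closed under the relevant
constructions (`D` maps `𝒜` into `𝒜_F`).  If `I` is a `D_F U`-module that is
injective in the category `𝒜_F` of `D_F U`-modules whose `U`-restriction lies in
`𝒜`, then `I`, regarded as a `U`-module, is injective in `𝒜`. -/
theorem localized_injective_is_injective
    {U L : Type} [Ring U] [Ring L] (f : U →+* L)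
    (𝒜 : ∀ (M : Type) [AddCommGroup M] [Module U M], Prop)
    (D : ∀ (M : Type) [AddCommGroup M] [Module U M], ModuleCat.{0} L)
    (θ : ∀ (M : Type) [AddCommGroup M] [Module U M], M →ₛₗ[f] D M)
    (huniv : ∀ (M : Type) [AddCommGroup M] [Module U M]
      (N : Type) [AddCommGroup N] [Module L N] (φ : M →ₛₗ[f] N),
      ∃! ψ : (D M : Type) →ₗ[L] N, ∀ m : M, ψ (θ M m) = φ m)
    (hexact : ∀ (M : Type) [AddCommGroup M] [Module U M]
      (N : Type) [AddCommGroup N] [Module U N] (ι : M →ₗ[U] N),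
      Injective ι → ∀ ψ : (D M : Type) →ₗ[L] (D N : Type),
        (∀ m : M, ψ (θ M m) = θ N (ι m)) → Injective ψ)
    (hclosed : ∀ (M : Type) [AddCommGroup M] [Module U M],
      𝒜 M → @𝒜 (D M) _ (Module.compHom (D M) f))
    (I : Type) [AddCommGroup I] [Module L I]
    (hinj : ∀ (M : Type) [AddCommGroup M] [Module L M]
      (N : Type) [AddCommGroup N] [Module L N],
      @𝒜 M _ (Module.compHom M f) → @𝒜 N _ (Module.compHom N f) →
      ∀ ι : M →ₗ[L] N, Injective ι → ∀ g : M →ₗ[L] I,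
        ∃ g' : N →ₗ[L] I, ∀ m, g' (ι m) = g m) :
    ∀ (M : Type) [AddCommGroup M] [Module U M]
      (N : Type) [AddCommGroup N] [Module U N],
      𝒜 M → 𝒜 N → ∀ ι : M →ₗ[U] N, Injective ι → ∀ g : M →ₛₗ[f] I,
        ∃ g' : N →ₛₗ[f] I, ∀ m, g' (ι m) = g m := by
  intro M _ _ N _ _ hM hN ι hι g
  obtain ⟨ghat, hghat, -⟩ := huniv M I g
  obtain ⟨Dι, hDι, -⟩ := huniv M (D N) ((θ N).comp ι)
  have hDιinj : Injective Dι := hexact M N ι hι Dι (fun m => by simpa using hDι m)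
  obtain ⟨g', hg'⟩ := hinj (D M) (D N) (hclosed M hM) (hclosed N hN) Dι hDιinj ghat
  refine ⟨(g'.comp (θ N) : N →ₛₗ[f] I), fun m => ?_⟩
  have h1 : (θ N) (ι m) = Dι ((θ M) m) := by simpa using (hDι m).symm
  simp only [LinearMap.comp_apply, h1, hg', hghat]
end

section
/- Let F = {f_1,...,f_k} be commuting locally ad-nilpotent elements of an algebra U and D_F U the Ore localization. For x = (x_1,...,x_k) ∈ C^k define Θ_F^x(u) = Σ_{i_1,...,i_k ≥ 0} C(x_1,i_1)···C(x_k,i_k) ad(f_1)^{i_1}···ad(f_k)^{i_k}(u) f_1^{−i_1}···f_k^{−i_k}, where C(x,i) = x(x−1)···(x−i+1)/i!. Then Θ_F^x is an algebra automorphism of D_F U and Θ_F^x ∘ Θ_F^y = Θ_F^{x+y} for all x, y ∈ C^k. -/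
/-- Generalized binomial coefficient `C(x,i) = x(x-1)⋯(x-i+1)/i!`. -/
noncomputable def genBinom (x : ℂ) (i : ℕ) : ℂ :=
  (∏ j ∈ Finset.range i, (x - (j : ℂ))) / (i.factorial : ℂ)

/-- `ad g : u ↦ g*u - u*g` as a ℂ-linear endomorphism. -/
noncomputable def adE {L : Type*} [Ring L] [Algebra ℂ L] (g : L) : Module.End ℂ L :=
  LinearMap.mulLeft ℂ g - LinearMap.mulRight ℂ g

/-- Iterated adjoint action `ad(f 1)^{m 1} ⋯ ad(f k)^{m k}` for a multi-index `m`. -/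
noncomputable def multiAd {L : Type*} [Ring L] [Algebra ℂ L] {k : ℕ}
    (f : Fin k → Lˣ) (m : Fin k → ℕ) : Module.End ℂ L :=
  (List.ofFn fun i => (adE ((f i : L))) ^ (m i)).prod

/-- `f 1 ^ (-m 1) ⋯ f k ^ (-m k)`. -/
noncomputable def invPow {L : Type*} [Ring L] [Algebra ℂ L] {k : ℕ}
    (f : Fin k → Lˣ) (m : Fin k → ℕ) : L :=
  (List.ofFn fun i => ((((f i)⁻¹ : Lˣ) : L)) ^ (m i)).prod

/-- The truncation (up to multi-indices `< N`) of the defining sum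
`Θ_F^x(u) = Σ C(x_1,i_1)⋯C(x_k,i_k) ad(f_1)^{i_1}⋯ad(f_k)^{i_k}(u) f^{-i}`. -/
noncomputable def thetaSum {L : Type*} [Ring L] [Algebra ℂ L] {k : ℕ}
    (f : Fin k → Lˣ) (x : Fin k → ℂ) (N : ℕ) (u : L) : L :=
  ∑ m ∈ Fintype.piFinset (fun _ : Fin k => Finset.range N),
    (∏ i, genBinom (x i) (m i)) • (multiAd f m u * invPow f m)


/-!
Write `E_g u = ad(g)(u) g⁻¹ = g u g⁻¹ - u`, so that `Θ_g^x = ∑ C(x,n) E_gⁿ` is the binomial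
power `(1 + E_g)^x` of conjugation by `g`; the sum is finite on each element because `E_g` is
locally nilpotent. For a natural exponent `m` it is conjugation by `g^m`, an algebra
automorphism, and `Θ_g^m ∘ Θ_g^n = Θ_g^(m+n)`. Evaluated at fixed elements, both sides of
`Θ_g^x(uv) = Θ_g^x(u) Θ_g^x(v)` and of `Θ_g^x ∘ Θ_g^y = Θ_g^(x+y)` are polynomial in the
exponents, so these identities extend from `ℕ` to `ℂ`. The factors `Θ_{f_i}` commute with each
other, and expanding their product gives the defining multiple sum of `Θ_F^x`.
-/

open Finset Polynomial

section PolynomialMap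

variable {K V W : Type*} [Field K] [AddCommGroup V] [Module K V] [AddCommGroup W] [Module K W]

def IsPolynomialMap (F : K → V) : Prop :=
  ∀ φ : Module.Dual K V, ∃ P : K[X], ∀ x, φ (F x) = P.eval x

theorem IsPolynomialMap.sub {F G : K → V} (hF : IsPolynomialMap F) (hG : IsPolynomialMap G) :
    IsPolynomialMap fun x => F x - G x := fun φ => by
  obtain ⟨P, hP⟩ := hF φ
  obtain ⟨Q, hQ⟩ := hG φ
  exact ⟨P - Q, fun x => by simp [hP, hQ]⟩

theorem IsPolynomialMap.map {F : K → V} (hF : IsPolynomialMap F) (A : V →ₗ[K] W) :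
    IsPolynomialMap fun x => A (F x) :=
  fun φ => hF (φ ∘ₗ A)

theorem IsPolynomialMap.comp_add_const {F : K → V} (hF : IsPolynomialMap F) (c : K) :
    IsPolynomialMap fun x => F (x + c) := fun φ => by
  obtain ⟨P, hP⟩ := hF φ
  exact ⟨P.comp (X + C c), fun x => by simp [hP]⟩

theorem IsPolynomialMap.eq_of_eq_natCast [CharZero K] {F G : K → V} (hF : IsPolynomialMap F)
    (hG : IsPolynomialMap G) (h : ∀ n : ℕ, F n = G n) : F = G := by
  funext x
  rw [← sub_eq_zero, ← Module.forall_dual_apply_eq_zero_iff K]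
  intro φ
  obtain ⟨P, hP⟩ := hF.sub hG φ
  have hP0 : P = 0 := P.eq_zero_of_infinite_isRoot <|
    Set.infinite_of_injective_forall_mem Nat.cast_injective fun n => by simp [← hP, h]
  rw [hP, hP0, eval_zero]

end PolynomialMap

section BinomialCoefficients

noncomputable def binomPoly (n : ℕ) : ℂ[X] :=
  C (n.factorial : ℂ)⁻¹ * descPochhammer ℂ n

@[simp]
theorem eval_binomPoly (n : ℕ) (x : ℂ) : (binomPoly n).eval x = genBinom x n := by
  simp [binomPoly, genBinom, descPochhammer_eval_eq_prod_range, div_eq_inv_mul]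

theorem genBinom_natCast (m n : ℕ) : genBinom m n = m.choose n := by
  rw [← eval_binomPoly, binomPoly, eval_mul, eval_C, descPochhammer_eval_eq_descFactorial,
    Nat.descFactorial_eq_factorial_mul_choose]
  push_cast
  rw [inv_mul_cancel_left₀ (by exact_mod_cast n.factorial_ne_zero)]

end BinomialCoefficients

def Module.End.IsLocallyNilpotent {R M : Type*} [Semiring R] [AddCommMonoid M] [Module R M]
    (E : Module.End R M) : Prop :=
  ∀ v, ∃ n, (E ^ n) v = 0

section BinomialSeries

variable {V : Type*} [AddCommGroup V] [Module ℂ V] (E : Module.End ℂ V)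

/-- A truncation of the binomial series of `(1 + E)^x`. -/
noncomputable def binomSeries (x : ℂ) (N : ℕ) : Module.End ℂ V :=
  ∑ n ∈ range N, genBinom x n • E ^ n

variable {E}

theorem binomSeries_apply (x : ℂ) (N : ℕ) (v : V) :
    binomSeries E x N v = ∑ n ∈ range N, genBinom x n • (E ^ n) v := by
  simp [binomSeries]

theorem binomSeries_apply_of_le {v : V} {N M : ℕ} (hv : (E ^ N) v = 0) (h : N ≤ M) (x : ℂ) :
    binomSeries E x M v = binomSeries E x N v := by
  simp only [binomSeries_apply]
  refine (sum_subset (range_subset_range.mpr h) fun n _ hn => ?_).symm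
  rw [Module.End.pow_map_zero_of_le (by simpa using hn) hv, smul_zero]

theorem binomSeries_apply_eq {v : V} {N M : ℕ} (hN : (E ^ N) v = 0) (hM : (E ^ M) v = 0)
    (x : ℂ) : binomSeries E x N v = binomSeries E x M v := by
  rw [← binomSeries_apply_of_le hN (le_max_left N M),
    binomSeries_apply_of_le hM (le_max_right N M)]

theorem binomSeries_natCast_apply {v : V} {N : ℕ} (hv : (E ^ N) v = 0) (m : ℕ) :
    binomSeries E m N v = ((1 + E) ^ m) v := by
  have binomial : ((1 + E) ^ m) v = ∑ n ∈ range (m + 1), (m.choose n : ℂ) • (E ^ n) v := by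
    simp [add_comm (1 : Module.End ℂ V), (Commute.one_right E).add_pow, Nat.cast_smul_eq_nsmul]
  rw [binomial, ← binomSeries_apply_of_le hv (le_max_left N (m + 1)), binomSeries_apply]
  refine (sum_subset (range_subset_range.mpr (le_max_right _ _)) fun n _ hn => ?_).symm.trans ?_
  · rw [genBinom_natCast, Nat.choose_eq_zero_of_lt (by simpa using hn), Nat.cast_zero, zero_smul]
  · simp [genBinom_natCast]

theorem isPolynomialMap_binomSeries (N : ℕ) (v : V) :
    IsPolynomialMap fun x => binomSeries E x N v := fun φ =>
  ⟨∑ n ∈ range N, binomPoly n * C (φ ((E ^ n) v)), fun x => by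
    simp [binomSeries_apply, eval_finsetSum]⟩

theorem Commute.binomSeries_left {A : Module.End ℂ V} (h : Commute E A) (x : ℂ) (N : ℕ) :
    Commute (binomSeries E x N) A :=
  Commute.sum_left _ _ _ fun n _ => (h.pow_left n).smul_left _

theorem pow_apply_binomSeries_eq_zero {w : V} {N : ℕ} (hw : (E ^ N) w = 0) (x : ℂ) (M : ℕ) :
    (E ^ N) (binomSeries E x M w) = 0 := by
  rw [← Module.End.mul_apply, ((Commute.refl E).pow_right N |>.binomSeries_left x M).symm.eq,
    Module.End.mul_apply, hw, map_zero]

theorem binomSeries_binomSeries_apply {v : V} {N : ℕ} (hv : (E ^ N) v = 0) (x y : ℂ) :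
    binomSeries E x N (binomSeries E y N v) = binomSeries E (x + y) N v := by
  have hnat : ∀ n : ℕ, (fun x => binomSeries E x N (binomSeries E n N v)) =
      fun x => binomSeries E (x + n) N v := fun n =>
    (isPolynomialMap_binomSeries N _).eq_of_eq_natCast
      ((isPolynomialMap_binomSeries N v).comp_add_const _) fun m => by
        rw [binomSeries_natCast_apply (pow_apply_binomSeries_eq_zero hv n N),
          binomSeries_natCast_apply hv, ← Nat.cast_add, binomSeries_natCast_apply hv, pow_add,
          Module.End.mul_apply]
  have hy : (fun y => binomSeries E x N (binomSeries E y N v)) =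
      fun y => binomSeries E (y + x) N v :=
    ((isPolynomialMap_binomSeries N v).map _).eq_of_eq_natCast
      ((isPolynomialMap_binomSeries N v).comp_add_const x) fun n => by
        rw [congrFun (hnat n) x, add_comm]
  rw [congrFun hy y, add_comm]

end BinomialSeries

section BinomialPower

open Module.End

variable {V : Type*} [AddCommGroup V] [Module ℂ V] {E : Module.End ℂ V}

/-- `(1 + E)^x` -/
noncomputable def binomPow (hE : E.IsLocallyNilpotent) (x : ℂ) : Module.End ℂ V where
  toFun v := binomSeries E x (hE v).choose v
  map_add' v w := by
    have hvw : (E ^ ((hE v).choose + (hE w).choose)) (v + w) = 0 := by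
      rw [map_add, pow_map_zero_of_le (Nat.le_add_right _ _) (hE v).choose_spec,
        pow_map_zero_of_le (Nat.le_add_left _ _) (hE w).choose_spec, add_zero]
    rw [binomSeries_apply_eq (hE (v + w)).choose_spec hvw, map_add,
      binomSeries_apply_of_le (hE v).choose_spec (Nat.le_add_right _ _),
      binomSeries_apply_of_le (hE w).choose_spec (Nat.le_add_left _ _)]
  map_smul' c v := by
    have hcv : (E ^ (hE v).choose) (c • v) = 0 := by rw [map_smul, (hE v).choose_spec, smul_zero]
    rw [binomSeries_apply_eq (hE (c • v)).choose_spec hcv, map_smul, RingHom.id_apply]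

variable (hE : E.IsLocallyNilpotent)

theorem binomPow_apply {v : V} {N : ℕ} (hv : (E ^ N) v = 0) (x : ℂ) :
    binomPow hE x v = binomSeries E x N v :=
  binomSeries_apply_eq (hE v).choose_spec hv x

theorem binomPow_natCast (m : ℕ) : binomPow hE m = (1 + E) ^ m := by
  ext v
  obtain ⟨N, hv⟩ := hE v
  rw [binomPow_apply hE hv, binomSeries_natCast_apply hv]

theorem binomPow_zero : binomPow hE 0 = 1 := by
  simpa using binomPow_natCast hE 0

theorem Commute.binomPow_left {A : Module.End ℂ V} (h : Commute E A) (x : ℂ) :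
    Commute (binomPow hE x) A := by
  ext v
  obtain ⟨N, hv⟩ := hE v
  have hAv : (E ^ N) (A v) = 0 := by rw [← mul_apply, (h.pow_left N).eq, mul_apply, hv, map_zero]
  rw [mul_apply, mul_apply, binomPow_apply hE hAv, binomPow_apply hE hv, ← mul_apply,
    ((h.binomSeries_left x N).eq), mul_apply]

theorem binomPow_add (x y : ℂ) : binomPow hE (x + y) = binomPow hE x * binomPow hE y := by
  ext v
  obtain ⟨N, hv⟩ := hE v
  rw [mul_apply, binomPow_apply hE hv, binomPow_apply hE hv,
    binomPow_apply hE (pow_apply_binomSeries_eq_zero hv y N), binomSeries_binomSeries_apply hv]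

end BinomialPower

section AlgebraAutomorphism

open Module.End

variable {L : Type*} [Ring L] [Algebra ℂ L]

theorem isPolynomialMap_binomSeries_mul (E E' : Module.End ℂ L) (N M : ℕ) (u v : L) :
    IsPolynomialMap fun x => binomSeries E x N u * binomSeries E' x M v := fun φ =>
  ⟨∑ p ∈ range N, ∑ q ∈ range M,
      binomPoly p * binomPoly q * C (φ ((E ^ p) u * (E' ^ q) v)), fun x => by
    simp [binomSeries_apply, sum_mul_sum, eval_finsetSum, mul_assoc, mul_left_comm]⟩

variable (T : L →ₐ[ℂ] L) (hT : IsLocallyNilpotent (T.toLinearMap - 1))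

theorem binomPow_apply_mul (x : ℂ) (u v : L) :
    binomPow hT x (u * v) = binomPow hT x u * binomPow hT x v := by
  obtain ⟨Nu, hu⟩ := hT u
  obtain ⟨Nv, hv⟩ := hT v
  obtain ⟨Nuv, huv⟩ := hT (u * v)
  set N := Nu + Nv + Nuv
  rw [binomPow_apply hT (pow_map_zero_of_le (by omega : Nuv ≤ N) huv),
    binomPow_apply hT (pow_map_zero_of_le (by omega : Nu ≤ N) hu),
    binomPow_apply hT (pow_map_zero_of_le (by omega : Nv ≤ N) hv)]
  refine congrFun ((isPolynomialMap_binomSeries N _).eq_of_eq_natCast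
    (isPolynomialMap_binomSeries_mul _ _ N N u v) fun m => ?_) x
  simp only [binomSeries_natCast_apply (pow_map_zero_of_le (by omega : Nuv ≤ N) huv),
    binomSeries_natCast_apply (pow_map_zero_of_le (by omega : Nu ≤ N) hu),
    binomSeries_natCast_apply (pow_map_zero_of_le (by omega : Nv ≤ N) hv),
    add_sub_cancel, pow_apply, AlgHom.coe_toLinearMap, iterate_map_mul]

theorem binomPow_apply_one (x : ℂ) : binomPow hT x 1 = 1 := by
  have h1 : ((T.toLinearMap - 1 : Module.End ℂ L) ^ 1) (1 : L) = 0 := by simp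
  simp [binomPow_apply hT h1, binomSeries_apply, genBinom]

/-- `T ^ x` -/
noncomputable def binomAlgEquiv (x : ℂ) : L ≃ₐ[ℂ] L where
  toFun := binomPow hT x
  invFun := binomPow hT (-x)
  left_inv u := by rw [← mul_apply, ← binomPow_add, neg_add_cancel, binomPow_zero, one_apply]
  right_inv u := by rw [← mul_apply, ← binomPow_add, add_neg_cancel, binomPow_zero, one_apply]
  map_add' := map_add _
  map_mul' := binomPow_apply_mul T hT x
  commutes' c := by
    simp [Algebra.algebraMap_eq_smul_one, binomPow_apply_one]

theorem binomAlgEquiv_apply (x : ℂ) (u : L) : binomAlgEquiv T hT x u = binomPow hT x u := rfl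

theorem binomAlgEquiv_add (x y : ℂ) :
    binomAlgEquiv T hT (x + y) = binomAlgEquiv T hT x * binomAlgEquiv T hT y :=
  AlgEquiv.ext fun u => by simp [binomAlgEquiv_apply, binomPow_add]

theorem commute_binomAlgEquiv {T' : L →ₐ[ℂ] L} (hT' : IsLocallyNilpotent (T'.toLinearMap - 1))
    (h : Commute (T.toLinearMap - 1) (T'.toLinearMap - 1)) (x y : ℂ) :
    Commute (binomAlgEquiv T hT x) (binomAlgEquiv T' hT' y) :=
  AlgEquiv.ext fun u => by
    simpa [binomAlgEquiv_apply] using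
      LinearMap.congr_fun ((h.binomPow_left hT x).symm.binomPow_left hT' y).symm.eq u

end AlgebraAutomorphism

section UnitConjugation

open LinearMap (mulLeft mulRight commute_mulLeft_right)

variable {L : Type*} [Ring L] [Algebra ℂ L]

theorem Commute.mulLeft_mulLeft {a b : L} (h : Commute a b) :
    Commute (mulLeft ℂ a) (mulLeft ℂ b) :=
  LinearMap.ext fun u => by simp [← mul_assoc, h.eq]

theorem Commute.mulRight_mulRight {a b : L} (h : Commute a b) :
    Commute (mulRight ℂ a) (mulRight ℂ b) :=
  LinearMap.ext fun u => by simp [mul_assoc, h.eq]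

theorem Commute.adE_mulRight {a b : L} (h : Commute a b) : Commute (adE a) (mulRight ℂ b) :=
  (commute_mulLeft_right a b).sub_left h.mulRight_mulRight

theorem Commute.adE_adE {a b : L} (h : Commute a b) : Commute (adE a) (adE b) :=
  (h.mulLeft_mulLeft.sub_right (commute_mulLeft_right a b)).sub_left
    ((commute_mulLeft_right b a).symm.sub_right h.mulRight_mulRight)

def unitConj (g : Lˣ) : L →ₐ[ℂ] L where
  toFun u := g * u * ↑g⁻¹
  map_one' := by simp
  map_mul' u v := by simp [mul_assoc]
  map_zero' := by simp
  map_add' u v := by simp [mul_add, add_mul]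
  commutes' c := by simp [← Algebra.commutes c, mul_assoc]

theorem unitConj_toLinearMap_sub_one (g : Lˣ) :
    (unitConj g).toLinearMap - 1 = mulRight ℂ (↑g⁻¹ : L) * adE (g : L) :=
  LinearMap.ext fun u => by simp [unitConj, adE, sub_mul, mul_assoc]

theorem pow_unitConj_sub_one_apply (g : Lˣ) (n : ℕ) (u : L) :
    (((unitConj g).toLinearMap - 1) ^ n) u = (adE (g : L) ^ n) u * (↑g⁻¹ : L) ^ n := by
  rw [unitConj_toLinearMap_sub_one,
    (Commute.refl (g : L)).units_inv_right.adE_mulRight.symm.mul_pow, LinearMap.pow_mulRight,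
    Module.End.mul_apply, LinearMap.mulRight_apply]

theorem isLocallyNilpotent_unitConj_sub_one {g : Lˣ}
    (hg : Module.End.IsLocallyNilpotent (adE (g : L))) :
    Module.End.IsLocallyNilpotent ((unitConj g).toLinearMap - 1) := fun u => by
  obtain ⟨N, hN⟩ := hg u
  exact ⟨N, by rw [pow_unitConj_sub_one_apply, hN, zero_mul]⟩

theorem Commute.unitConj_sub_one_mulRight {g : Lˣ} {c : L} (h : Commute (g : L) c) :
    Commute ((unitConj g).toLinearMap - 1) (mulRight ℂ c) := by
  rw [unitConj_toLinearMap_sub_one]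
  exact h.units_inv_left.mulRight_mulRight.mul_left h.adE_mulRight

theorem Commute.unitConj_sub_one_adE {g : Lˣ} {a : L} (h : Commute (g : L) a) :
    Commute ((unitConj g).toLinearMap - 1) (adE a) := by
  rw [unitConj_toLinearMap_sub_one]
  exact (h.symm.units_inv_right.adE_mulRight.symm).mul_left h.adE_adE

theorem Commute.unitConj_sub_one {g h : Lˣ} (hgh : Commute (g : L) h) :
    Commute ((unitConj g).toLinearMap - 1) ((unitConj h).toLinearMap - 1) := by
  rw [unitConj_toLinearMap_sub_one h]
  exact (hgh.units_inv_right.unitConj_sub_one_mulRight).mul_right hgh.unitConj_sub_one_adE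

end UnitConjugation

theorem Finset.sum_piFinset_fin_succ {M : Type*} [AddCommMonoid M] {k : ℕ} (s : Finset ℕ)
    (F : (Fin (k + 1) → ℕ) → M) :
    ∑ m ∈ Fintype.piFinset (fun _ => s), F m =
      ∑ n ∈ s, ∑ m ∈ Fintype.piFinset (fun _ : Fin k => s), F (Fin.cons n m) := by
  have h := Finset.filter_piFinset_eq_map_consEquiv (fun _ : Fin (k + 1) => s) fun _ => True
  simp only [filter_true] at h
  rw [h, sum_map, sum_product]
  rfl

section Family

open LinearMap (mulRight)
open Module.End

variable {L : Type*} [Ring L] [Algebra ℂ L] {k : ℕ}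

theorem multiAd_cons (f : Fin (k + 1) → Lˣ) (n : ℕ) (m : Fin k → ℕ) :
    multiAd f (Fin.cons n m) = adE (f 0 : L) ^ n * multiAd (fun i => f i.succ) m := by
  simp [multiAd, List.ofFn_succ]

theorem invPow_cons (f : Fin (k + 1) → Lˣ) (n : ℕ) (m : Fin k → ℕ) :
    invPow f (Fin.cons n m) = (↑(f 0)⁻¹ : L) ^ n * invPow (fun i => f i.succ) m := by
  simp [invPow, List.ofFn_succ]

variable {f : Fin k → Lˣ}

theorem Commute.invPow_right {c : L} (h : ∀ j, Commute c (f j)) (m : Fin k → ℕ) :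
    Commute c (invPow f m) :=
  Commute.list_prod_right _ _ fun _ hb => by
    obtain ⟨j, rfl⟩ := List.mem_ofFn.mp hb
    exact ((h j).units_inv_right).pow_right _

theorem Commute.multiAd_right {A : Module.End ℂ L} (h : ∀ j, Commute A (adE (f j : L)))
    (m : Fin k → ℕ) : Commute A (multiAd f m) :=
  Commute.list_prod_right _ _ fun _ hb => by
    obtain ⟨j, rfl⟩ := List.mem_ofFn.mp hb
    exact (h j).pow_right _

theorem Commute.unitConj_sub_one_multiAd_invPow {g : Lˣ} (h : ∀ j, Commute (g : L) (f j))
    (m : Fin k → ℕ) :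
    Commute ((unitConj g).toLinearMap - 1) (mulRight ℂ (invPow f m) * multiAd f m) :=
  (Commute.unitConj_sub_one_mulRight (Commute.invPow_right h m)).mul_right
    (Commute.multiAd_right (fun j => (h j).unitConj_sub_one_adE) m)

theorem pow_unitConj_sub_one_thetaSum_eq_zero {g : Lˣ} (h : ∀ j, Commute (g : L) (f j))
    {u : L} {N : ℕ} (hu : (adE (g : L) ^ N) u = 0) (x : Fin k → ℂ) (M : ℕ) :
    (((unitConj g).toLinearMap - 1) ^ N) (thetaSum f x M u) = 0 := by
  have hu' : (((unitConj g).toLinearMap - 1) ^ N) u = 0 := by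
    rw [pow_unitConj_sub_one_apply, hu, zero_mul]
  refine (map_sum _ _ _).trans (sum_eq_zero fun m _ => ?_)
  have hterm :=
    LinearMap.congr_fun ((Commute.unitConj_sub_one_multiAd_invPow h m).pow_left N).eq u
  simp only [mul_apply, LinearMap.mulRight_apply, hu', map_zero] at hterm
  rw [map_smul, hterm, smul_zero]

theorem multiAd_cons_apply_mul_invPow_cons (f : Fin (k + 1) → Lˣ)
    (h : ∀ j : Fin k, Commute (f 0 : L) (f j.succ)) (n : ℕ) (m : Fin k → ℕ) (u : L) :
    multiAd f (Fin.cons n m) u * invPow f (Fin.cons n m) =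
      (((unitConj (f 0)).toLinearMap - 1) ^ n)
        (multiAd (fun i => f i.succ) m u * invPow (fun i => f i.succ) m) := by
  have hc := LinearMap.congr_fun
    ((Commute.unitConj_sub_one_mulRight
      (Commute.invPow_right (f := fun i => f i.succ) h m)).pow_left n).eq
    (multiAd (fun i => f i.succ) m u)
  simp only [mul_apply, LinearMap.mulRight_apply] at hc
  rw [hc, pow_unitConj_sub_one_apply, multiAd_cons, invPow_cons, mul_apply, mul_assoc]

theorem thetaSum_succ (f : Fin (k + 1) → Lˣ) (h : ∀ j : Fin k, Commute (f 0 : L) (f j.succ))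
    (x : Fin (k + 1) → ℂ) (N : ℕ) (u : L) :
    thetaSum f x N u = binomSeries ((unitConj (f 0)).toLinearMap - 1) (x 0) N
      (thetaSum (fun i => f i.succ) (fun i => x i.succ) N u) := by
  rw [thetaSum, Finset.sum_piFinset_fin_succ, binomSeries_apply]
  refine sum_congr rfl fun n _ => ?_
  rw [thetaSum, map_sum, smul_sum]
  refine sum_congr rfl fun m _ => ?_
  rw [multiAd_cons_apply_mul_invPow_cons f h, map_smul, smul_smul, Fin.prod_univ_succ]
  rfl

end Family

section Theta

open Module.End

variable {L : Type*} [Ring L] [Algebra ℂ L]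

/-- `Θ_g^x` -/
noncomputable def theta (g : Lˣ) (hg : IsLocallyNilpotent (adE (g : L))) (x : ℂ) :
    L ≃ₐ[ℂ] L :=
  binomAlgEquiv (unitConj g) (isLocallyNilpotent_unitConj_sub_one hg) x

theorem theta_apply_of_pow_eq_zero {g : Lˣ} (hg : IsLocallyNilpotent (adE (g : L))) {u : L}
    {N : ℕ} (hu : (((unitConj g).toLinearMap - 1) ^ N) u = 0) (x : ℂ) :
    theta g hg x u = binomSeries ((unitConj g).toLinearMap - 1) x N u :=
  binomPow_apply _ hu x

theorem theta_add (g : Lˣ) (hg : IsLocallyNilpotent (adE (g : L))) (x y : ℂ) :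
    theta g hg (x + y) = theta g hg x * theta g hg y :=
  binomAlgEquiv_add _ _ x y

theorem Commute.theta {g h : Lˣ} (hgh : Commute (g : L) h)
    (hg : IsLocallyNilpotent (adE (g : L))) (hh : IsLocallyNilpotent (adE (h : L))) (x y : ℂ) :
    Commute (theta g hg x) (theta h hh y) :=
  commute_binomAlgEquiv _ _ _ hgh.unitConj_sub_one x y

variable {k : ℕ}

/-- `Θ_F^x = Θ_{f_1}^{x_1} ⋯ Θ_{f_k}^{x_k}` -/
noncomputable def thetaFamily (f : Fin k → Lˣ) (hf : ∀ i, IsLocallyNilpotent (adE (f i : L)))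
    (x : Fin k → ℂ) : L ≃ₐ[ℂ] L :=
  (List.ofFn fun i => theta (f i) (hf i) (x i)).prod

theorem thetaFamily_succ (f : Fin (k + 1) → Lˣ) (hf : ∀ i, IsLocallyNilpotent (adE (f i : L)))
    (x : Fin (k + 1) → ℂ) :
    thetaFamily f hf x = theta (f 0) (hf 0) (x 0) *
      thetaFamily (fun i => f i.succ) (fun i => hf i.succ) (fun i => x i.succ) := by
  simp [thetaFamily, List.ofFn_succ]

theorem thetaFamily_add (f : Fin k → Lˣ) (hcomm : ∀ i j, Commute (f i : L) (f j))
    (hf : ∀ i, IsLocallyNilpotent (adE (f i : L))) (x y : Fin k → ℂ) :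
    thetaFamily f hf (x + y) = thetaFamily f hf x * thetaFamily f hf y := by
  induction k with
  | zero => simp [thetaFamily]
  | succ k ih =>
    have hcomm₀ : Commute (theta (f 0) (hf 0) (y 0))
        (thetaFamily (fun i => f i.succ) (fun i => hf i.succ) (fun i => x i.succ)) :=
      Commute.list_prod_right _ _ fun _ hb => by
        obtain ⟨j, rfl⟩ := List.mem_ofFn.mp hb
        exact (hcomm 0 j.succ).theta _ _ _ _
    have htail : (fun i : Fin k => (x + y) i.succ) = (fun i => x i.succ) + fun i => y i.succ :=
      rfl
    rw [thetaFamily_succ, thetaFamily_succ f hf x, thetaFamily_succ f hf y, htail,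
      ih (fun i => f i.succ) (fun i j => hcomm i.succ j.succ), Pi.add_apply, theta_add]
    simp only [mul_assoc]
    rw [← mul_assoc (theta (f 0) (hf 0) (y 0)), hcomm₀.eq, mul_assoc]

theorem thetaFamily_apply (f : Fin k → Lˣ) (hcomm : ∀ i j, Commute (f i : L) (f j))
    (hf : ∀ i, IsLocallyNilpotent (adE (f i : L))) (x : Fin k → ℂ) {u : L} {N : ℕ}
    (hu : ∀ i, (adE (f i : L) ^ N) u = 0) :
    thetaFamily f hf x u = thetaSum f x N u := by
  induction k with
  | zero => simp [thetaFamily, thetaSum, multiAd, invPow]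
  | succ k ih =>
    rw [thetaFamily_succ, AlgEquiv.mul_apply,
      ih (fun i => f i.succ) (fun i j => hcomm i.succ j.succ) _ _ fun i => hu i.succ,
      theta_apply_of_pow_eq_zero _
        (pow_unitConj_sub_one_thetaSum_eq_zero (fun j => hcomm 0 j.succ) (hu 0) _ _),
      thetaSum_succ f fun j => hcomm 0 j.succ]

end Theta

/-- let `f 1, ..., f k` be commuting locally ad-nilpotent elements of
an algebra, invertible in the localization `L = D_F U` (here: units of `L`).  Then the
generalized-binomial series defines an algebra automorphism `Θ_F^x` of `L` for every
`x ∈ ℂ^k`, and `Θ_F^x ∘ Θ_F^y = Θ_F^{x+y}`. -/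
theorem exists_theta_conjugation {L : Type*} [Ring L] [Algebra ℂ L] (k : ℕ)
    (f : Fin k → Lˣ)
    (hcomm : ∀ i j, (f i : L) * (f j : L) = (f j : L) * (f i : L))
    (hnil : ∀ i (u : L), ∃ N : ℕ, ((adE ((f i : L))) ^ N) u = 0) :
    ∃ Θ : (Fin k → ℂ) → (L ≃ₐ[ℂ] L),
      (∀ (x : Fin k → ℂ) (u : L) (N : ℕ),
        (∀ i, ((adE ((f i : L))) ^ N) u = 0) → Θ x u = thetaSum f x N u) ∧
      (∀ x y : Fin k → ℂ, ∀ u : L, Θ x (Θ y u) = Θ (x + y) u) :=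
  ⟨thetaFamily f hnil, fun x _ _ hu => thetaFamily_apply f hcomm hnil x hu,
    fun x y u => (DFunLike.congr_fun (thetaFamily_add f hcomm hnil x y) u).symm⟩
end

section
/- Let C(k) be the quiver on the vertex set Z_2^k (vertices of the k-dimensional cube) with a pair of opposite arrows for each edge, and let A(k) be the quotient of its path algebra by identifying any two paths with the same endpoints whose multisets of colors agree, where parallel edges share a color. Then the category of Z-graded A(k)-modules is equivalent to the category of (Z_2^k × Z)-graded modules over the polynomial ring C[x_1,...,x_k], where deg x_i = (δ_i, 1). -/
open CategoryTheory

/-- The group `G_k = (ℤ/2)^k`, the vertex set of the `k`-cube quiver `C(k)`. -/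
abbrev Gk (k : ℕ) := Fin k → ZMod 2

/-- The standard basis vector `δ i` of `G_k`. -/
def deltaG (k : ℕ) (i : Fin k) : Gk k := Pi.single i 1

/-- Generators of the path algebra of `C(k)`: a vertex idempotent `e v` for each
vertex `v`, and an arrow `a i v : v → v + δ i` of color `i` for each vertex `v`. -/
inductive AkGen (k : ℕ)
  | e : Gk k → AkGen k
  | a : Fin k → Gk k → AkGen k

abbrev FAk (k : ℕ) := FreeAlgebra ℂ (AkGen k)

noncomputable def eF (k : ℕ) (v : Gk k) : FAk k := FreeAlgebra.ι ℂ (AkGen.e v)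

noncomputable def aF (k : ℕ) (i : Fin k) (v : Gk k) : FAk k :=
  FreeAlgebra.ι ℂ (AkGen.a i v)

/-- The defining relations of `A(k)`: the path algebra relations of the quiver
`C(k)` (orthogonal idempotents summing to 1, source/target relations for arrows)
together with the identification of any two paths with the same endpoints and the
same multiset of colors (generated by the commutation of the squares of `C(k)`). -/
inductive AkRel (k : ℕ) : FAk k → FAk k → Prop
  | idem (v : Gk k) : AkRel k (eF k v * eF k v) (eF k v)
  | orth (v w : Gk k) : v ≠ w → AkRel k (eF k v * eF k w) 0
  | unit : AkRel k (∑ v : Gk k, eF k v) 1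
  | src (i : Fin k) (v : Gk k) : AkRel k (aF k i v * eF k v) (aF k i v)
  | tgt (i : Fin k) (v : Gk k) :
      AkRel k (eF k (v + deltaG k i) * aF k i v) (aF k i v)
  | comm (i j : Fin k) (v : Gk k) :
      AkRel k (aF k i (v + deltaG k j) * aF k j v)
        (aF k j (v + deltaG k i) * aF k i v)

/-- The algebra `A(k)`. -/
noncomputable abbrev Ak (k : ℕ) := RingQuot (AkRel k)

noncomputable def eA (k : ℕ) (v : Gk k) : Ak k :=
  RingQuot.mkAlgHom ℂ (AkRel k) (eF k v)

noncomputable def aA (k : ℕ) (i : Fin k) (v : Gk k) : Ak k :=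
  RingQuot.mkAlgHom ℂ (AkRel k) (aF k i v)

/-- A ℤ-graded `A(k)`-module: an `A(k)`-module with an internal ℤ-grading by
ℂ-subspaces, compatible with the grading of `A(k)` in which the vertex idempotents
have degree 0 and the arrows degree 1 (path length). -/
structure GrAkMod (k : ℕ) where
  M : Type
  [acg : AddCommGroup M]
  [modC : Module ℂ M]
  [modA : Module (Ak k) M]
  [tower : IsScalarTower ℂ (Ak k) M]
  gr : ℤ → Submodule ℂ M
  internal : DirectSum.IsInternal gr
  compat_e : ∀ (v : Gk k) (n : ℤ), ∀ m ∈ gr n, eA k v • m ∈ gr n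
  compat_a : ∀ (i : Fin k) (v : Gk k) (n : ℤ), ∀ m ∈ gr n, aA k i v • m ∈ gr (n + 1)

attribute [instance] GrAkMod.acg GrAkMod.modC GrAkMod.modA GrAkMod.tower

noncomputable instance (k : ℕ) : Category (GrAkMod k) where
  Hom X Y := {f : X.M →ₗ[Ak k] Y.M // ∀ n : ℤ, ∀ m ∈ X.gr n, f m ∈ Y.gr n}
  id X := ⟨LinearMap.id, fun _ _ hm => hm⟩
  comp f g := ⟨g.1.comp f.1, fun n m hm => g.2 n _ (f.2 n m hm)⟩
  id_comp f := Subtype.ext (LinearMap.comp_id f.1)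
  comp_id f := Subtype.ext (LinearMap.id_comp f.1)
  assoc f g h := rfl

/-- A `(G_k × ℤ)`-graded module over `ℂ[x_1,...,x_k]`, where `deg x_i = (δ i, 1)`:
a `ℂ[x_1,...,x_k]`-module with an internal `(G_k × ℤ)`-grading by ℂ-subspaces such
that multiplication by `x i` maps the `(g, n)`-component into the
`(g + δ i, n + 1)`-component. -/
structure GrPolyMod (k : ℕ) where
  M : Type
  [acg : AddCommGroup M]
  [modC : Module ℂ M]
  [modP : Module (MvPolynomial (Fin k) ℂ) M]
  [tower : IsScalarTower ℂ (MvPolynomial (Fin k) ℂ) M]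
  gr : Gk k × ℤ → Submodule ℂ M
  internal : DirectSum.IsInternal gr
  compat : ∀ (i : Fin k) (g : Gk k) (n : ℤ), ∀ m ∈ gr (g, n),
    (MvPolynomial.X i : MvPolynomial (Fin k) ℂ) • m ∈ gr (g + deltaG k i, n + 1)

attribute [instance] GrPolyMod.acg GrPolyMod.modC GrPolyMod.modP GrPolyMod.tower

noncomputable instance (k : ℕ) : Category (GrPolyMod k) where
  Hom X Y := {f : X.M →ₗ[MvPolynomial (Fin k) ℂ] Y.M //
    ∀ p : Gk k × ℤ, ∀ m ∈ X.gr p, f m ∈ Y.gr p}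
  id X := ⟨LinearMap.id, fun _ _ hm => hm⟩
  comp f g := ⟨g.1.comp f.1, fun p m hm => g.2 p _ (f.2 p m hm)⟩
  id_comp f := Subtype.ext (LinearMap.comp_id f.1)
  comp_id f := Subtype.ext (LinearMap.id_comp f.1)
  assoc f g h := rfl

/-!
The sums `x i = ∑ v, a i v` of the arrows of each colour commute in `A(k)`, so
`ℂ[x_1,...,x_k]` maps to `A(k)`. Since the vertex idempotents `e v` are complete and orthogonal
and preserve the ℤ-grading, a ℤ-graded `A(k)`-module `M` splits as `⊕ e v • M_n`, a
`(G_k × ℤ)`-grading which `x i` shifts by `(δ i, 1)`. Conversely, on a `(G_k × ℤ)`-graded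
`ℂ[x]`-module the projections onto the `G_k`-components are complete orthogonal idempotents
which `x i` moves from `v` to `v + δ i`; this is all the relations of `A(k)` need in order to
let `e v` act as the projection and `a i v` as `x i` after it. Both constructions keep the
underlying space and are mutually inverse.
-/

open MvPolynomial

namespace DirectSum

section Projections

variable {R M ι : Type*} [Ring R] [AddCommGroup M] [Module R M] [DecidableEq ι]
  {A : ι → Submodule R M}

theorem isInternal_of_projections (ρ : ι → M →ₗ[R] M)
    (h_id : ∀ i, A i ≤ LinearMap.eqLocus (ρ i) LinearMap.id)
    (h_zero : ∀ i j, i ≠ j → A j ≤ LinearMap.ker (ρ i)) (h_top : iSup A = ⊤) :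
    IsInternal A := by
  refine isInternal_submodule_of_iSupIndep_of_iSup_eq_top (fun i => ?_) h_top
  rw [Submodule.disjoint_def]
  intro m hi hne
  have h0 : ρ i m = 0 := iSup₂_le (fun j hj => h_zero i j (Ne.symm hj)) hne
  simpa [h0] using (h_id i hi).symm

theorem IsInternal.linearMap_ext {N : Type*} [AddCommGroup N] [Module R N] (hA : IsInternal A)
    {f g : M →ₗ[R] N} (h : ∀ i, ∀ m ∈ A i, f m = g m) : f = g := by
  refine LinearMap.ext_on (s := ⋃ i, (A i : Set M)) ?_ ?_
  · rw [← Submodule.iSup_eq_span, hA.submodule_iSup_eq_top]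
  · rintro m ⟨_, ⟨i, rfl⟩, hm⟩
    exact h i m hm

variable (hA : IsInternal A)

/-- The projection of `M` onto `⨆ i ∈ s, A i` along the remaining summands. -/
noncomputable def IsInternal.projOn (s : ι → Prop) [DecidablePred s] : M →ₗ[R] M :=
  toModule R ι M (fun i => if s i then (A i).subtype else 0) ∘ₗ
    (LinearEquiv.ofBijective (coeLinearMap A) hA).symm.toLinearMap

theorem IsInternal.projOn_apply_of_mem (s : ι → Prop) [DecidablePred s] {i : ι} {m : M}
    (hm : m ∈ A i) : hA.projOn s m = if s i then m else 0 := by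
  have h : (LinearEquiv.ofBijective (coeLinearMap A) hA).symm m =
      lof R ι (fun i => A i) i ⟨m, hm⟩ := by
    rw [LinearEquiv.symm_apply_eq, lof_eq_of]
    exact (coeLinearMap_of A i ⟨m, hm⟩).symm
  simp only [IsInternal.projOn, LinearMap.comp_apply, LinearEquiv.coe_coe, h, toModule_lof]
  split_ifs <;> rfl

theorem IsInternal.completeOrthogonalIdempotents_projOn {κ : Type*} [Fintype κ] [DecidableEq κ]
    (c : ι → κ) : CompleteOrthogonalIdempotents fun t => hA.projOn (c · = t) := by
  refine CompleteOrthogonalIdempotents.iff_ortho_complete.2 ⟨fun t t' htt' => ?_, ?_⟩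
  · refine hA.linearMap_ext fun i m hm => ?_
    rw [Module.End.mul_apply, hA.projOn_apply_of_mem _ hm]
    split_ifs with h
    · rw [hA.projOn_apply_of_mem _ hm, if_neg (h ▸ htt'.symm), LinearMap.zero_apply]
    · rw [map_zero, LinearMap.zero_apply]
  · refine hA.linearMap_ext fun i m hm => ?_
    simp [LinearMap.sum_apply, hA.projOn_apply_of_mem _ hm]

end Projections

theorem IsInternal.iSup_fst {R M κ ι : Type*} [Ring R] [AddCommGroup M] [Module R M]
    [DecidableEq κ] [DecidableEq ι] {A : κ × ι → Submodule R M} (hA : IsInternal A) :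
    IsInternal fun i => ⨆ j, A (j, i) := by
  refine isInternal_of_projections (fun i => hA.projOn (·.2 = i)) (fun i => iSup_le fun j => ?_)
    (fun i i' hii' => iSup_le fun j => ?_) ?_
  · intro m hm
    simp [LinearMap.mem_eqLocus, hA.projOn_apply_of_mem _ hm]
  · intro m hm
    simp [hA.projOn_apply_of_mem _ hm, hii'.symm]
  · rw [iSup_comm, ← iSup_prod, hA.submodule_iSup_eq_top]

end DirectSum

theorem CompleteOrthogonalIdempotents.iSup_map_eq {R M κ : Type*} [Ring R] [AddCommGroup M]
    [Module R M] [Fintype κ] {e : κ → Module.End R M} (he : CompleteOrthogonalIdempotents e)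
    {N : Submodule R M} (hN : ∀ j, N ≤ N.comap (e j)) : ⨆ j, N.map (e j) = N := by
  refine le_antisymm (iSup_le fun j => Submodule.map_le_iff_le_comap.2 (hN j)) fun m hm => ?_
  have hsum : ∑ j, e j m = m := by rw [← LinearMap.sum_apply, he.complete, Module.End.one_apply]
  rw [← hsum]
  exact Submodule.sum_mem _ fun j _ => Submodule.mem_iSup_of_mem j (Submodule.mem_map_of_mem hm)

theorem DirectSum.IsInternal.prod_map_of_completeOrthogonalIdempotents {R M ι κ : Type*} [Ring R]
    [AddCommGroup M] [Module R M] [DecidableEq ι] [DecidableEq κ] [Fintype κ]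
    {A : ι → Submodule R M} (hA : IsInternal A) {e : κ → Module.End R M}
    (he : CompleteOrthogonalIdempotents e) (hAe : ∀ j i, A i ≤ (A i).comap (e j)) :
    IsInternal fun p : κ × ι => (A p.2).map (e p.1) := by
  refine isInternal_of_projections (fun p => e p.1 * hA.projOn (· = p.2)) ?_ ?_ ?_
  · rintro ⟨j, i⟩ _ ⟨m, hm, rfl⟩
    rw [LinearMap.mem_eqLocus, Module.End.mul_apply, hA.projOn_apply_of_mem _ (hAe j i hm),
      if_pos rfl, ← Module.End.mul_apply, he.idem j, LinearMap.id_apply]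
  · rintro ⟨j, i⟩ ⟨j', i'⟩ hne _ ⟨m, hm, rfl⟩
    rw [LinearMap.mem_ker, Module.End.mul_apply, hA.projOn_apply_of_mem _ (hAe j' i' hm)]
    split_ifs with hi
    · have hj : j ≠ j' := fun hj => hne (by rw [hj, hi])
      rw [← Module.End.mul_apply, he.ortho hj, LinearMap.zero_apply]
    · exact map_zero _
  · rw [iSup_prod, iSup_comm]
    exact (iSup_congr fun i => he.iSup_map_eq (hAe · i)).trans hA.submodule_iSup_eq_top

namespace Ak

variable (k : ℕ)

theorem completeOrthogonalIdempotents_eA : CompleteOrthogonalIdempotents (eA k) where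
  idem v := by
    simpa [IsIdempotentElem, eA, map_mul] using RingQuot.mkAlgHom_rel ℂ (AkRel.idem v)
  ortho v w h := by simpa [eA, map_mul] using RingQuot.mkAlgHom_rel ℂ (AkRel.orth v w h)
  complete := by simpa [eA, map_sum] using RingQuot.mkAlgHom_rel ℂ (AkRel.unit (k := k))

theorem aA_mul_eA (i : Fin k) (v : Gk k) : aA k i v * eA k v = aA k i v := by
  simpa [eA, aA, map_mul] using RingQuot.mkAlgHom_rel ℂ (AkRel.src i v)

theorem eA_mul_aA (i : Fin k) (v : Gk k) : eA k (v + deltaG k i) * aA k i v = aA k i v := by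
  simpa [eA, aA, map_mul] using RingQuot.mkAlgHom_rel ℂ (AkRel.tgt i v)

theorem aA_mul_aA_comm (i j : Fin k) (v : Gk k) :
    aA k i (v + deltaG k j) * aA k j v = aA k j (v + deltaG k i) * aA k i v := by
  simpa [aA, map_mul] using RingQuot.mkAlgHom_rel ℂ (AkRel.comm i j v)

theorem aA_mul_eA_of_ne {i : Fin k} {v w : Gk k} (h : v ≠ w) : aA k i v * eA k w = 0 := by
  rw [← aA_mul_eA, mul_assoc, (completeOrthogonalIdempotents_eA k).ortho h, mul_zero]

/-- The image of the variable `x i` in `A(k)`. -/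
noncomputable def xA (i : Fin k) : Ak k := ∑ v, aA k i v

theorem xA_mul_eA (i : Fin k) (v : Gk k) : xA k i * eA k v = aA k i v := by
  rw [xA, Finset.sum_mul, Finset.sum_eq_single v (fun w _ hw => aA_mul_eA_of_ne k hw) (by simp),
    aA_mul_eA]

theorem xA_mul_aA (i j : Fin k) (v : Gk k) :
    xA k i * aA k j v = aA k i (v + deltaG k j) * aA k j v := by
  conv_lhs => rw [← eA_mul_aA, ← mul_assoc, xA_mul_eA]

theorem xA_mul_xA_comm (i j : Fin k) : xA k i * xA k j = xA k j * xA k i := by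
  have h (i j : Fin k) : xA k i * xA k j = ∑ v, aA k i (v + deltaG k j) * aA k j v := by
    nth_rw 2 [xA]
    simp only [Finset.mul_sum, xA_mul_aA]
  simp only [h, aA_mul_aA_comm]

open scoped IsMulCommutative in
noncomputable def polyToAk : MvPolynomial (Fin k) ℂ →ₐ[ℂ] Ak k :=
  have := Algebra.isMulCommutative_adjoin ℂ (s := Set.range (xA k))
    (by rintro _ ⟨i, rfl⟩ _ ⟨j, rfl⟩; exact xA_mul_xA_comm k i j)
  (Algebra.adjoin ℂ (Set.range (xA k))).val.comp
    (aeval fun i => ⟨xA k i, Algebra.subset_adjoin (Set.mem_range_self i)⟩)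

theorem polyToAk_X (i : Fin k) : polyToAk k (X i) = xA k i := by
  simp [polyToAk]

theorem induction_on {P : Ak k → Prop} (a : Ak k) (algebraMap : ∀ c, P (algebraMap ℂ _ c))
    (eA : ∀ v, P (eA k v)) (aA : ∀ i v, P (aA k i v)) (add : ∀ a b, P a → P b → P (a + b))
    (mul : ∀ a b, P a → P b → P (a * b)) : P a := by
  obtain ⟨x, rfl⟩ := RingQuot.mkAlgHom_surjective ℂ (AkRel k) a
  induction x using FreeAlgebra.induction with
  | grade0 c => simpa using algebraMap c
  | grade1 g => cases g with
    | e v => exact eA v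
    | a i v => exact aA i v
  | mul x y hx hy => simpa using mul _ _ hx hy
  | add x y hx hy => simpa using add _ _ hx hy

theorem algHom_ext {B : Type*} [Semiring B] [Algebra ℂ B] {f g : Ak k →ₐ[ℂ] B}
    (he : ∀ v, f (eA k v) = g (eA k v)) (ha : ∀ i v, f (aA k i v) = g (aA k i v)) : f = g :=
  RingQuot.ringQuot_ext' ℂ _ _ <| FreeAlgebra.hom_ext <| funext fun
    | .e v => he v
    | .a i v => ha i v

section Lift

variable {k} {B : Type*} [Semiring B] [Algebra ℂ B] {e : Gk k → B}
  (he : CompleteOrthogonalIdempotents e) {ψ : MvPolynomial (Fin k) ℂ →ₐ[ℂ] B}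
  (hψe : ∀ i v, ψ (X i) * e v = e (v + deltaG k i) * ψ (X i))

noncomputable def lift : Ak k →ₐ[ℂ] B :=
  RingQuot.liftAlgHom ℂ ⟨FreeAlgebra.lift ℂ (AkGen.rec e fun i v => ψ (X i) * e v),
    fun _ _ h => by
      have path2 (i j : Fin k) (v : Gk k) :
          ψ (X i) * e (v + deltaG k j) * (ψ (X j) * e v) = ψ (X i * X j) * e v := by
        rw [mul_assoc, ← mul_assoc (e _), ← hψe, mul_assoc, (he.idem v).eq, ← mul_assoc,
          ← map_mul]
      induction h <;>
        simp only [eF, aF, map_mul, map_sum, map_one, map_zero, FreeAlgebra.lift_ι_apply]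
      case idem v => exact (he.idem v).eq
      case orth v w h => exact he.ortho h
      case unit => exact he.complete
      case src i v => rw [mul_assoc, (he.idem v).eq]
      case tgt i v => rw [← mul_assoc, ← hψe, mul_assoc, (he.idem v).eq]
      case comm i j v => rw [path2, path2, mul_comm (X i)]⟩

@[simp]
theorem lift_eA (v : Gk k) : lift he hψe (eA k v) = e v := by
  simp [lift, eA, eF]

@[simp]
theorem lift_aA (i : Fin k) (v : Gk k) : lift he hψe (aA k i v) = ψ (X i) * e v := by
  simp [lift, aA, aF]

theorem lift_comp_polyToAk : (lift he hψe).comp (polyToAk k) = ψ := by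
  refine MvPolynomial.algHom_ext fun i => ?_
  simp [polyToAk_X, xA, ← Finset.mul_sum, he.complete]

end Lift

end Ak

namespace GrAkMod

variable {k : ℕ} (V : GrAkMod k)

theorem completeOrthogonalIdempotents_lsmul_eA :
    CompleteOrthogonalIdempotents fun v => Algebra.lsmul ℂ ℂ V.M (eA k v) :=
  (Ak.completeOrthogonalIdempotents_eA k).map (Algebra.lsmul ℂ ℂ V.M).toRingHom

noncomputable def toGrPolyMod : GrPolyMod k :=
  letI : Module (MvPolynomial (Fin k) ℂ) V.M := Module.compHom V.M (Ak.polyToAk k).toRingHom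
  { M := V.M
    tower := ⟨fun c p m => by
      change Ak.polyToAk k (c • p) • m = c • Ak.polyToAk k p • m
      rw [map_smul, smul_assoc]⟩
    gr := fun p => (V.gr p.2).map (Algebra.lsmul ℂ ℂ V.M (eA k p.1))
    internal := V.internal.prod_map_of_completeOrthogonalIdempotents
      (e := fun v => Algebra.lsmul ℂ ℂ V.M (eA k v)) V.completeOrthogonalIdempotents_lsmul_eA
      fun v n m hm => V.compat_e v n m hm
    compat := by
      rintro i v n _ ⟨m, hm, rfl⟩
      change Ak.polyToAk k (X i) • eA k v • m ∈ _
      rw [Ak.polyToAk_X, smul_smul, Ak.xA_mul_eA, ← Ak.eA_mul_aA, ← smul_smul]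
      exact Submodule.mem_map_of_mem (V.compat_a i v n m hm) }

noncomputable def toGrPolyModMap {V V' : GrAkMod k} (f : V ⟶ V') :
    V.toGrPolyMod ⟶ V'.toGrPolyMod :=
  ⟨{ toFun := f.1
     map_add' := f.1.map_add
     map_smul' := fun p m => f.1.map_smul (Ak.polyToAk k p) m },
   by
     rintro ⟨v, n⟩ _ ⟨m, hm, rfl⟩
     exact ⟨f.1 m, f.2 n m hm, (f.1.map_smul (eA k v) m).symm⟩⟩

end GrAkMod

namespace GrPolyMod

variable {k : ℕ} (W : GrPolyMod k)

noncomputable def vertexProj (v : Gk k) : Module.End ℂ W.M := W.internal.projOn (·.1 = v)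

variable {W} in
theorem vertexProj_apply_of_mem {v w : Gk k} {n : ℤ} {m : W.M} (hm : m ∈ W.gr (w, n)) :
    W.vertexProj v m = if w = v then m else 0 :=
  W.internal.projOn_apply_of_mem _ hm

variable {W} in
theorem vertexProj_mem {v w : Gk k} {n : ℤ} {m : W.M} (hm : m ∈ W.gr (w, n)) :
    W.vertexProj v m ∈ W.gr (v, n) := by
  rw [vertexProj_apply_of_mem hm]
  split_ifs with h
  · exact h ▸ hm
  · exact zero_mem _

variable {W} in
theorem vertexProj_mem_of_mem_iSup {v : Gk k} {n : ℤ} {m : W.M} (hm : m ∈ ⨆ w, W.gr (w, n)) :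
    W.vertexProj v m ∈ W.gr (v, n) :=
  (iSup_le fun _ _ => vertexProj_mem : ⨆ w, W.gr (w, n) ≤ (W.gr (v, n)).comap _) hm

theorem completeOrthogonalIdempotents_vertexProj :
    CompleteOrthogonalIdempotents W.vertexProj :=
  W.internal.completeOrthogonalIdempotents_projOn Prod.fst

theorem lsmul_X_mul_vertexProj (i : Fin k) (v : Gk k) :
    Algebra.lsmul ℂ ℂ W.M (X i : MvPolynomial (Fin k) ℂ) * W.vertexProj v =
      W.vertexProj (v + deltaG k i) *
        Algebra.lsmul ℂ ℂ W.M (X i : MvPolynomial (Fin k) ℂ) := by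
  refine W.internal.linearMap_ext fun ⟨w, n⟩ m hm => ?_
  simp only [Module.End.mul_apply, Algebra.lsmul_apply, vertexProj_apply_of_mem hm,
    vertexProj_apply_of_mem (W.compat i w n m hm), add_left_inj]
  split_ifs <;> simp

noncomputable def akAction : Ak k →ₐ[ℂ] Module.End ℂ W.M :=
  Ak.lift W.completeOrthogonalIdempotents_vertexProj W.lsmul_X_mul_vertexProj

noncomputable def toGrAkMod : GrAkMod k :=
  letI : Module (Ak k) W.M := Module.compHom W.M W.akAction.toRingHom
  { M := W.M
    tower := ⟨fun c a m => by
      change W.akAction (c • a) m = c • W.akAction a m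
      rw [map_smul, LinearMap.smul_apply]⟩
    gr := fun n => ⨆ v, W.gr (v, n)
    internal := W.internal.iSup_fst
    compat_e := fun v n m hm => by
      change W.akAction (eA k v) m ∈ _
      rw [akAction, Ak.lift_eA]
      exact Submodule.mem_iSup_of_mem v (vertexProj_mem_of_mem_iSup hm)
    compat_a := fun i v n m hm => by
      change W.akAction (aA k i v) m ∈ _
      rw [akAction, Ak.lift_aA]
      exact Submodule.mem_iSup_of_mem _ (W.compat i v n _ (vertexProj_mem_of_mem_iSup hm)) }

variable {W} {W' : GrPolyMod k}

theorem map_vertexProj (f : W ⟶ W') (v : Gk k) (m : W.M) :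
    f.1 (W.vertexProj v m) = W'.vertexProj v (f.1 m) := by
  have h : f.1.restrictScalars ℂ ∘ₗ W.vertexProj v =
      W'.vertexProj v ∘ₗ f.1.restrictScalars ℂ :=
    W.internal.linearMap_ext fun ⟨_, _⟩ m hm => by
      simp only [LinearMap.comp_apply, LinearMap.coe_restrictScalars, vertexProj_apply_of_mem hm,
        vertexProj_apply_of_mem (f.2 _ m hm)]
      split_ifs <;> simp
  exact LinearMap.congr_fun h m

theorem map_akAction (f : W ⟶ W') (a : Ak k) (m : W.M) :
    f.1 (W.akAction a m) = W'.akAction a (f.1 m) := by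
  induction a using Ak.induction_on generalizing m with
  | algebraMap c => simp
  | eA v => simp [akAction, map_vertexProj]
  | aA i v => simp [akAction, map_vertexProj]
  | add a b ha hb => simp [ha, hb]
  | mul a b ha hb => simp [ha, hb]

noncomputable def toGrAkModMap (f : W ⟶ W') : W.toGrAkMod ⟶ W'.toGrAkMod :=
  ⟨{ toFun := f.1
     map_add' := f.1.map_add
     map_smul' := map_akAction f },
   fun n => (iSup_le fun v m hm => Submodule.mem_iSup_of_mem v (f.2 _ m hm) :
     ⨆ v, W.gr (v, n) ≤ (⨆ v, W'.gr (v, n)).comap (f.1.restrictScalars ℂ))⟩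

end GrPolyMod

noncomputable def grAkModToGrPolyMod (k : ℕ) : GrAkMod k ⥤ GrPolyMod k where
  obj := GrAkMod.toGrPolyMod
  map := GrAkMod.toGrPolyModMap

noncomputable def grPolyModToGrAkMod (k : ℕ) : GrPolyMod k ⥤ GrAkMod k where
  obj := GrPolyMod.toGrAkMod
  map := GrPolyMod.toGrAkModMap

namespace GrAkMod

variable {k : ℕ} (V : GrAkMod k)

theorem vertexProj_toGrPolyMod (v : Gk k) :
    V.toGrPolyMod.vertexProj v = Algebra.lsmul ℂ ℂ V.M (eA k v) := by
  have he := Ak.completeOrthogonalIdempotents_eA k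
  refine V.toGrPolyMod.internal.linearMap_ext fun ⟨w, n⟩ _ hm => ?_
  rw [GrPolyMod.vertexProj_apply_of_mem hm]
  obtain ⟨m, -, rfl⟩ := hm
  change (if w = v then eA k w • m else 0) = eA k v • eA k w • m
  rw [smul_smul, he.mul_eq]
  by_cases h : w = v
  · rw [if_pos h, if_pos h.symm, h]
  · rw [if_neg h, if_neg (Ne.symm h), zero_smul]

theorem akAction_toGrPolyMod : V.toGrPolyMod.akAction = Algebra.lsmul ℂ ℂ V.M := by
  refine Ak.algHom_ext k (fun v => ?_) fun i v => ?_
  · rw [GrPolyMod.akAction, Ak.lift_eA, vertexProj_toGrPolyMod]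
    rfl
  · rw [GrPolyMod.akAction, Ak.lift_aA, vertexProj_toGrPolyMod]
    refine LinearMap.ext fun (m : V.M) => ?_
    change Ak.polyToAk k (X i) • eA k v • m = aA k i v • m
    rw [Ak.polyToAk_X, smul_smul, Ak.xA_mul_eA]

theorem akAction_toGrPolyMod_apply (a : Ak k) (m : V.M) : V.toGrPolyMod.akAction a m = a • m :=
  LinearMap.congr_fun (AlgHom.congr_fun V.akAction_toGrPolyMod a) m

theorem gr_toGrPolyMod_toGrAkMod (n : ℤ) : V.toGrPolyMod.toGrAkMod.gr n = V.gr n := by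
  change ⨆ v, (V.gr n).map (Algebra.lsmul ℂ ℂ V.M (eA k v)) = V.gr n
  exact V.completeOrthogonalIdempotents_lsmul_eA.iSup_map_eq fun v => V.compat_e v n

noncomputable def unitIso : V ≅ V.toGrPolyMod.toGrAkMod where
  hom := ⟨{ toFun := id
            map_add' := fun _ _ => rfl
            map_smul' := fun a m => (V.akAction_toGrPolyMod_apply a m).symm },
          fun n _ hm => (V.gr_toGrPolyMod_toGrAkMod n).ge hm⟩
  inv := ⟨{ toFun := id
            map_add' := fun _ _ => rfl
            map_smul' := V.akAction_toGrPolyMod_apply },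
          fun n _ hm => (V.gr_toGrPolyMod_toGrAkMod n).le hm⟩
  hom_inv_id := rfl
  inv_hom_id := rfl

end GrAkMod

namespace GrPolyMod

variable {k : ℕ} (W : GrPolyMod k)

theorem akAction_polyToAk_apply (p : MvPolynomial (Fin k) ℂ) (m : W.M) :
    W.akAction (Ak.polyToAk k p) m = p • m :=
  LinearMap.congr_fun (AlgHom.congr_fun (Ak.lift_comp_polyToAk _ _) p) m

theorem gr_toGrAkMod_toGrPolyMod (p : Gk k × ℤ) : W.toGrAkMod.toGrPolyMod.gr p = W.gr p := by
  obtain ⟨v, n⟩ := p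
  change (⨆ w, W.gr (w, n)).map (W.akAction (eA k v)) = _
  rw [akAction, Ak.lift_eA]
  refine le_antisymm (Submodule.map_le_iff_le_comap.2 fun m hm => vertexProj_mem_of_mem_iSup hm)
    fun m hm => ⟨m, Submodule.mem_iSup_of_mem v hm, ?_⟩
  rw [vertexProj_apply_of_mem hm, if_pos rfl]

noncomputable def counitIso : W.toGrAkMod.toGrPolyMod ≅ W where
  hom := ⟨{ toFun := id
            map_add' := fun _ _ => rfl
            map_smul' := W.akAction_polyToAk_apply },
          fun p _ hm => (W.gr_toGrAkMod_toGrPolyMod p).le hm⟩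
  inv := ⟨{ toFun := id
            map_add' := fun _ _ => rfl
            map_smul' := fun p m => (W.akAction_polyToAk_apply p m).symm },
          fun p _ hm => (W.gr_toGrAkMod_toGrPolyMod p).ge hm⟩
  hom_inv_id := rfl
  inv_hom_id := rfl

end GrPolyMod

/-- the category of ℤ-graded `A(k)`-modules is equivalent to the
category of `(G_k × ℤ)`-graded modules over the polynomial ring `ℂ[x_1,...,x_k]`
with `deg x_i = (δ i, 1)`. -/
theorem graded_Ak_equiv_graded_poly (k : ℕ) :
    Nonempty (GrAkMod k ≌ GrPolyMod k) :=
  ⟨.mk (grAkModToGrPolyMod k) (grPolyModToGrAkMod k) (NatIso.ofComponents GrAkMod.unitIso)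
    (NatIso.ofComponents GrPolyMod.counitIso)⟩
end
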